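/- arXiv:1302.4661 — 11 statements merged into one kernel-verified Lean document; each statement's English description precedes it below -/
import Mathlib

section
/- Let X and Y be Banach spaces, T : X → Y a bounded linear operator, and Z a closed linear subspace of X. If the image T[Z] is closed and complemented in Y, and Z ∩ ker(T) is complemented in X, then Z is complemented in X. -/
open Filter Topology
open scoped ZeroAtInfty

noncomputable section

/-- `E` is an extension operator for the closed set `F` in `K`. -/
def IsExtensionOperator {K : Type*} [TopologicalSpace K] (F : Set K)
    (E : C(↥F, ℝ) →L[ℝ] C(K, ℝ)) : Prop :=
  ∀ f : C(↥F, ℝ), (E f).restrict F = f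

/-- `F` admits an extension operator in `K`. -/
def HasExtensionOperator {K : Type*} [TopologicalSpace K] (F : Set K) : Prop :=
  ∃ E : C(↥F, ℝ) →L[ℝ] C(K, ℝ), IsExtensionOperator F E

/-- `K` has the extension property. -/
def HasExtensionProperty (K : Type*) [TopologicalSpace K] : Prop :=
  ∀ F : Set K, F.Nonempty → IsClosed F → HasExtensionOperator F

/-- `F` admits a regular extension operator in `K`. -/
def HasRegularExtensionOperator {K : Type*} [TopologicalSpace K] [CompactSpace K]
    (F : Set K) (hF : IsClosed F) : Prop :=
  haveI : CompactSpace ↥F := isCompact_iff_compactSpace.mp hF.isCompact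
  ∃ E : C(↥F, ℝ) →L[ℝ] C(K, ℝ), IsExtensionOperator F E ∧ ‖E‖ ≤ 1 ∧ E 1 = 1

/-- `K` has the regular extension property. -/
def HasRegularExtensionProperty (K : Type*) [TopologicalSpace K] [CompactSpace K] : Prop :=
  ∀ F : Set K, F.Nonempty → ∀ hF : IsClosed F, HasRegularExtensionOperator F hF

/-- The submodule `C(K|G)` of `C(K, ℝ)` of functions vanishing on `G`. -/
def vanishingSubmodule {K : Type*} [TopologicalSpace K] (G : Set K) :
    Submodule ℝ C(K, ℝ) where
  carrier := {f | ∀ x ∈ G, f x = 0}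
  add_mem' := by intro f g hf hg x hx; simp [hf x hx, hg x hx]
  zero_mem' := by intro x hx; simp
  smul_mem' := by intro c f hf x hx; simp [hf x hx]

/-- The canonical basis vector of `c₀(I)`: the characteristic function of `{i}`. -/
def c0Single {I : Type*} [TopologicalSpace I] [DiscreteTopology I] (i : I) : C₀(I, ℝ) :=
  letI := Classical.decEq I
  { toFun := fun j => if j = i then (1 : ℝ) else 0
    continuous_toFun := continuous_of_discreteTopology
    zero_at_infty' := by
      have h : (fun j => if j = i then (1 : ℝ) else 0) =ᶠ[Filter.cocompact I] (fun _ => 0) := by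
        filter_upwards [Filter.mem_cocompact.mpr ⟨{i}, isCompact_singleton, subset_rfl⟩] with j hj
        simp only [Set.mem_compl_iff, Set.mem_singleton_iff] at hj
        simp [hj]
      exact Filter.Tendsto.congr' h.symm tendsto_const_nhds }

/-- `X` satisfies the countable chain condition. -/
def CountableChainCondition (X : Type*) [TopologicalSpace X] : Prop :=
  ∀ 𝒰 : Set (Set X), (∀ U ∈ 𝒰, IsOpen U ∧ U.Nonempty) → 𝒰.Pairwise Disjoint → 𝒰.Countable

/-
The map `z ↦ (P (T z), Q z)`, with `P` a projection onto `T[Z]` and `Q` a projection onto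
`Z ∩ ker T`, is a bounded linear bijection from `Z` onto `T[Z] × (Z ∩ ker T)` (a preimage of
`(T z₀, n)` is `z₀ - Q z₀ + n`), both sides being Banach spaces. By the open mapping theorem its inverse `S` is bounded, and `S ∘ (P ∘ T, Q)` is a
bounded projection of `X` onto `Z`.
-/

open Function

theorem Submodule.closedComplemented_of_bijective_restrict {𝕜 E F : Type*}
    [NontriviallyNormedField 𝕜] [NormedAddCommGroup E] [NormedSpace 𝕜 E]
    [NormedAddCommGroup F] [NormedSpace 𝕜 F] [CompleteSpace F] (Z : Submodule 𝕜 E)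
    [CompleteSpace Z] (A : E →L[𝕜] F) (hA : Bijective fun z : Z => A z) :
    Z.ClosedComplemented :=
  let e := ContinuousLinearEquiv.ofBijective (A ∘L Z.subtypeL)
    (LinearMap.ker_eq_bot.mpr hA.1) (LinearMap.range_eq_top.mpr hA.2)
  ⟨e.symm.toContinuousLinearMap ∘L A, fun z => e.symm_apply_apply z⟩

theorem Submodule.bijective_prod_of_projections {R X Y : Type*} [Ring R] [AddCommGroup X]
    [Module R X] [AddCommGroup Y] [Module R Y] {T : X →ₗ[R] Y} {Z : Submodule R X}
    (P : Y →ₗ[R] Z.map T) (hP : ∀ y : Z.map T, P y = y)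
    (Q : X →ₗ[R] ↥(Z ⊓ LinearMap.ker T)) (hQ : ∀ n : ↥(Z ⊓ LinearMap.ker T), Q n = n) :
    Bijective (((P ∘ₗ T).prod Q) ∘ₗ Z.subtype) := by
  have hPT (z : X) (hz : z ∈ Z) : P (T z) = ⟨T z, z, hz, rfl⟩ := hP ⟨T z, z, hz, rfl⟩
  have hTQ (x : X) : T (Q x) = 0 := (Q x).2.2
  constructor
  · refine (injective_iff_map_eq_zero _).mpr fun ⟨z, hz⟩ h => ?_
    simp only [LinearMap.comp_apply, LinearMap.prod_apply, Function.prod_apply,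
      Submodule.subtype_apply, Prod.mk_eq_zero, hPT z hz] at h
    have hTz : T z = 0 := congrArg Subtype.val h.1
    have hQz : Q z = ⟨z, hz, hTz⟩ := hQ ⟨z, hz, hTz⟩
    rw [h.2] at hQz
    exact Subtype.ext (congrArg Subtype.val hQz).symm
  · rintro ⟨⟨_, z₀, hz₀, rfl⟩, n⟩
    have hz : z₀ - Q z₀ + n ∈ Z := Z.add_mem (Z.sub_mem hz₀ (Q z₀).2.1) n.2.1
    have hTn : T n = 0 := n.2.2
    exact ⟨⟨_, hz⟩, by simp [hPT _ hz₀, hTQ, hTn, hQ]⟩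

theorem stmt0 {X Y : Type*} [NormedAddCommGroup X] [NormedSpace ℝ X] [CompleteSpace X]
    [NormedAddCommGroup Y] [NormedSpace ℝ Y] [CompleteSpace Y]
    (T : X →L[ℝ] Y) (Z : Submodule ℝ X) (hZ : IsClosed (Z : Set X))
    (hTZ_closed : IsClosed ((Z.map (T : X →ₗ[ℝ] Y) : Submodule ℝ Y) : Set Y))
    (hTZ_compl : (Z.map (T : X →ₗ[ℝ] Y)).ClosedComplemented)
    (hker_compl : (Z ⊓ LinearMap.ker (T : X →ₗ[ℝ] Y)).ClosedComplemented) :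
    Z.ClosedComplemented := by
  obtain ⟨P, hP⟩ := hTZ_compl
  obtain ⟨Q, hQ⟩ := hker_compl
  have : CompleteSpace Z := hZ.completeSpace_coe
  have : CompleteSpace (Z.map (T : X →ₗ[ℝ] Y)) := hTZ_closed.completeSpace_coe
  have : CompleteSpace ↥(Z ⊓ LinearMap.ker (T : X →ₗ[ℝ] Y)) :=
    (hZ.inter T.isClosed_ker).completeSpace_coe
  have hbij := Submodule.bijective_prod_of_projections (T := (T : X →ₗ[ℝ] Y)) (Z := Z)
    (P : Y →ₗ[ℝ] _) hP (Q : X →ₗ[ℝ] _) hQ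
  exact Z.closedComplemented_of_bijective_restrict ((P ∘L T).prod Q) hbij
end
end

section
/- Let K be a compact Hausdorff space, I a set, and S : c0(I) → C(K) a linear isometric embedding. For each i ∈ I let ξ_i ∈ C(K) be the image under S of the i-th canonical basis vector, and set G = ⋂_{i∈I} ξ_i⁻¹(0). Then the image of S is complemented in C(K|G). -/
open Filter Topology
open scoped ZeroAtInfty

noncomputable section

/-!
Write `ξ i = S (c0Single i)`. Finitely supported vectors are dense in `c₀(I)`, so `S f` vanishes
wherever all `ξ i` do, i.e. on `G`. Since `S` is isometric, `|ξ i| + |ξ j| ≤ 1` pointwise for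
`i ≠ j`, and each `ξ i` attains `|ξ i (x i)| = 1` at some point `x i`; hence `ξ j (x i) = 0` for
`j ≠ i` and `S f (x i) = ξ i (x i) * f i`. Every cluster point of `x` along the cofinite filter
lies in `G`, so each `g` vanishing on `G` satisfies `g (x i) → 0`, and
`g ↦ (ξ i (x i) * g (x i))ᵢ` is a bounded left inverse of `S` on `C(K|G)`.
-/

section C0

open ZeroAtInftyContinuousMap

variable {α : Type*} [TopologicalSpace α]

theorem ZeroAtInftyContinuousMap.abs_apply_le_norm (f : C₀(α, ℝ)) (a : α) : |f a| ≤ ‖f‖ := by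
  rw [← norm_toBCF_eq_norm]
  exact f.toBCF.norm_coe_le_norm a

theorem ZeroAtInftyContinuousMap.norm_le_of_forall_abs_le {f : C₀(α, ℝ)} {C : ℝ} (hC : 0 ≤ C)
    (h : ∀ a, |f a| ≤ C) : ‖f‖ ≤ C := by
  rw [← norm_toBCF_eq_norm]
  exact (BoundedContinuousFunction.norm_le hC).mpr h

def ZeroAtInftyContinuousMap.evalCLM (a : α) : C₀(α, ℝ) →L[ℝ] ℝ :=
  LinearMap.mkContinuous
    { toFun := fun f => f a
      map_add' := fun _ _ => rfl
      map_smul' := fun _ _ => rfl } 1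
    (fun f => by simpa using f.abs_apply_le_norm a)

@[simp]
theorem ZeroAtInftyContinuousMap.evalCLM_apply (a : α) (f : C₀(α, ℝ)) : evalCLM a f = f a := rfl

variable {I : Type*} [TopologicalSpace I] [DiscreteTopology I]

def ZeroAtInftyContinuousMap.ofTendstoCofinite (a : I → ℝ) (ha : Tendsto a cofinite (𝓝 0)) :
    C₀(I, ℝ) :=
  ⟨⟨a, continuous_of_discreteTopology⟩, by rwa [cocompact_eq_cofinite]⟩

@[simp]
theorem ZeroAtInftyContinuousMap.ofTendstoCofinite_apply (a : I → ℝ)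
    (ha : Tendsto a cofinite (𝓝 0)) (i : I) : ofTendstoCofinite a ha i = a i := rfl

theorem c0Single_apply [DecidableEq I] (i j : I) : c0Single i j = if j = i then 1 else 0 := by
  change (letI := Classical.decEq I; if j = i then (1 : ℝ) else 0) = _
  congr

theorem sum_smul_c0Single_apply [DecidableEq I] (s : Finset I) (a : I → ℝ) (j : I) :
    (∑ i ∈ s, a i • c0Single i) j = if j ∈ s then a j else 0 := by
  rw [← evalCLM_apply, map_sum]
  simp [c0Single_apply]

theorem hasSum_smul_c0Single (f : C₀(I, ℝ)) : HasSum (fun i => f i • c0Single i) f := by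
  classical
  refine Metric.tendsto_nhds.2 fun ε hε => ?_
  have hf : Tendsto f cofinite (𝓝 0) := by simpa [cocompact_eq_cofinite] using f.zero_at_infty'
  have hsmall : {j | ε / 2 ≤ |f j|}.Finite := by
    simpa using eventually_cofinite.1 (hf.abs.eventually (gt_mem_nhds (by simpa using half_pos hε)))
  filter_upwards [eventually_ge_atTop hsmall.toFinset] with s hs
  rw [dist_eq_norm]
  refine (norm_le_of_forall_abs_le (half_pos hε).le fun j => ?_).trans_lt (half_lt_self hε)
  rw [ZeroAtInftyContinuousMap.sub_apply, sum_smul_c0Single_apply]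
  split_ifs with hj
  · simpa using (half_pos hε).le
  · have : |f j| < ε / 2 := not_le.1 fun h => hj (hs (hsmall.mem_toFinset.2 h))
    simpa using this.le

theorem ContinuousLinearMap.ext_c0Single {E : Type*} [TopologicalSpace E] [AddCommMonoid E]
    [Module ℝ E] [T2Space E] {φ ψ : C₀(I, ℝ) →L[ℝ] E}
    (h : ∀ i, φ (c0Single i) = ψ (c0Single i)) : φ = ψ := by
  ext f
  have hφ := (hasSum_smul_c0Single f).mapL φ
  have hψ := (hasSum_smul_c0Single f).mapL ψ
  simp only [map_smul, h] at hφ hψ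
  exact hφ.unique hψ

theorem norm_c0Single (i : I) : ‖c0Single i‖ = 1 := by
  classical
  refine le_antisymm (norm_le_of_forall_abs_le zero_le_one fun j => ?_) ?_
  · rw [c0Single_apply]
    split_ifs <;> simp
  · simpa [c0Single_apply] using (c0Single i).abs_apply_le_norm i

theorem norm_c0Single_add_smul_le {i j : I} (hij : i ≠ j) {t : ℝ} (ht : |t| ≤ 1) :
    ‖c0Single i + t • c0Single j‖ ≤ 1 := by
  classical
  refine norm_le_of_forall_abs_le zero_le_one fun k => ?_
  rw [ZeroAtInftyContinuousMap.add_apply, ZeroAtInftyContinuousMap.smul_apply, c0Single_apply,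
    c0Single_apply]
  split_ifs with hki hkj <;> simp_all

end C0

theorem ContinuousMap.exists_norm_apply_eq_norm {α E : Type*} [TopologicalSpace α]
    [CompactSpace α] [Nonempty α] [NormedAddCommGroup E] (f : C(α, E)) : ∃ a, ‖f a‖ = ‖f‖ := by
  obtain ⟨a, -, hmax⟩ :=
    isCompact_univ.exists_isMaxOn Set.univ_nonempty f.continuous.norm.continuousOn
  exact ⟨a, le_antisymm (f.norm_coe_le_norm a)
    ((f.norm_le (norm_nonneg _)).2 fun b => hmax (Set.mem_univ b))⟩

theorem abs_mul_le_abs_of_abs_le_one {a b : ℝ} (ha : |a| ≤ 1) : |a * b| ≤ |b| := by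
  rw [abs_mul]
  exact mul_le_of_le_one_left (abs_nonneg b) ha

theorem abs_add_abs_le_of_abs_add_le_of_abs_sub_le {a b c : ℝ} (h₁ : |a + b| ≤ c)
    (h₂ : |a - b| ≤ c) : |a| + |b| ≤ c := by
  rw [abs_le] at h₁ h₂
  cases abs_cases a <;> cases abs_cases b <;> linarith

section IsometricCopyOfC0

variable {I : Type*} [TopologicalSpace I] [DiscreteTopology I]
  {K : Type*} [TopologicalSpace K] [CompactSpace K] (S : C₀(I, ℝ) →ₗᵢ[ℝ] C(K, ℝ))

theorem apply_eq_zero_of_forall_apply_c0Single_eq_zero {y : K}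
    (hy : ∀ i, S (c0Single i) y = 0) (f : C₀(I, ℝ)) : S f y = 0 := by
  have : (ContinuousMap.evalCLM ℝ y).comp S.toContinuousLinearMap = 0 :=
    ContinuousLinearMap.ext_c0Single hy
  exact congr($this f)

theorem abs_add_abs_apply_c0Single_le_one {i j : I} (hij : i ≠ j) (y : K) :
    |S (c0Single i) y| + |S (c0Single j) y| ≤ 1 := by
  have key : ∀ t : ℝ, |t| ≤ 1 → |S (c0Single i) y + t * S (c0Single j) y| ≤ 1 := by
    intro t ht
    calc |S (c0Single i) y + t * S (c0Single j) y| = ‖S (c0Single i + t • c0Single j) y‖ := by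
          simp
      _ ≤ ‖S (c0Single i + t • c0Single j)‖ := ContinuousMap.norm_coe_le_norm _ y
      _ ≤ 1 := by rw [S.norm_map]; exact norm_c0Single_add_smul_le hij ht
  exact abs_add_abs_le_of_abs_add_le_of_abs_sub_le (by simpa using key 1 (by simp))
    (by simpa [sub_eq_add_neg] using key (-1) (by simp))

theorem exists_abs_apply_c0Single_eq_one (i : I) : ∃ y, |S (c0Single i) y| = 1 := by
  have hnorm : ‖S (c0Single i)‖ = 1 := by rw [S.norm_map, norm_c0Single]
  rcases isEmpty_or_nonempty K with hK | hK
  · simp [Subsingleton.elim (S (c0Single i)) 0] at hnorm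
  · simpa [hnorm] using (S (c0Single i)).exists_norm_apply_eq_norm

theorem apply_c0Single_eq_zero_of_abs_eq_one {i j : I} {y : K}
    (hy : |S (c0Single i) y| = 1) (hji : j ≠ i) : S (c0Single j) y = 0 := by
  have := abs_add_abs_apply_c0Single_le_one S hji.symm y
  exact abs_eq_zero.1 (le_antisymm (by linarith) (abs_nonneg _))

theorem apply_eq_mul_of_abs_eq_one {i : I} {y : K} (hy : |S (c0Single i) y| = 1)
    (f : C₀(I, ℝ)) : S f y = S (c0Single i) y * f i := by
  classical
  have : (ContinuousMap.evalCLM ℝ y).comp S.toContinuousLinearMap =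
      S (c0Single i) y • ZeroAtInftyContinuousMap.evalCLM i := by
    refine ContinuousLinearMap.ext_c0Single fun j => ?_
    rcases eq_or_ne j i with rfl | hji
    · simp [c0Single_apply]
    · simp [c0Single_apply, hji.symm, apply_c0Single_eq_zero_of_abs_eq_one S hy hji]
  exact congr($this f)

theorem tendsto_apply_cofinite_of_abs_eq_one {x : I → K} (hx : ∀ i, |S (c0Single i) (x i)| = 1)
    {g : C(K, ℝ)} (hg : ∀ y, (∀ i, S (c0Single i) y = 0) → g y = 0) :
    Tendsto (fun i => g (x i)) cofinite (𝓝 0) := by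
  have hx : Tendsto x cofinite (𝓝ˢ {y | ∀ i, S (c0Single i) y = 0}) := by
    refine isCompact_univ.tendsto_nhdsSet_of_mapClusterPt (by simp) fun y _ hy i => ?_
    refine (isClosed_eq (S (c0Single i)).continuous continuous_const).mem_of_mapClusterPt hy ?_
    filter_upwards [eventually_cofinite_ne i] with j hj
    exact apply_c0Single_eq_zero_of_abs_eq_one S (hx j) hj.symm
  rw [← nhdsSet_singleton]
  exact (g.continuous.tendsto_nhdsSet fun y hy => Set.mem_singleton_iff.2 (hg y hy)).comp hx

end IsometricCopyOfC0

section Sampling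

variable {K : Type*} [TopologicalSpace K] [CompactSpace K]
  {I : Type*} [TopologicalSpace I] [DiscreteTopology I]
  (x : I → K) {w : I → ℝ}

def samplingCLM (hw : ∀ i, |w i| ≤ 1) (Z : Submodule ℝ C(K, ℝ))
    (hZ : ∀ g ∈ Z, Tendsto (fun i => g (x i)) cofinite (𝓝 0)) : Z →L[ℝ] C₀(I, ℝ) :=
  LinearMap.mkContinuous
    { toFun := fun g => ZeroAtInftyContinuousMap.ofTendstoCofinite (fun i => w i * g.1 (x i))
        (squeeze_zero_norm (fun i => abs_mul_le_abs_of_abs_le_one (hw i))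
          (by simpa using (hZ g g.2).norm))
      map_add' := fun g h => by ext i; simp [mul_add]
      map_smul' := fun c g => by ext i; simp [mul_left_comm] } 1
    (fun g => by
      rw [one_mul]
      refine ZeroAtInftyContinuousMap.norm_le_of_forall_abs_le (norm_nonneg g) fun i => ?_
      exact (abs_mul_le_abs_of_abs_le_one (hw i)).trans (g.1.norm_coe_le_norm (x i)))

theorem samplingCLM_apply (hw : ∀ i, |w i| ≤ 1) (Z : Submodule ℝ C(K, ℝ))
    (hZ : ∀ g ∈ Z, Tendsto (fun i => g (x i)) cofinite (𝓝 0)) (g : Z) (i : I) :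
    samplingCLM x hw Z hZ g i = w i * g.1 (x i) :=
  rfl

end Sampling

theorem stmt1_general {K : Type*} [TopologicalSpace K] [CompactSpace K]
    {I : Type*} [TopologicalSpace I] [DiscreteTopology I]
    (S : C₀(I, ℝ) →ₗᵢ[ℝ] C(K, ℝ))
    (G : Set K) (hG : G = ⋂ i : I, (fun x => S (c0Single i) x) ⁻¹' {0}) :
    LinearMap.range S.toLinearMap ≤ vanishingSubmodule G ∧
      (Submodule.comap (vanishingSubmodule G).subtype
        (LinearMap.range S.toLinearMap)).ClosedComplemented := by
  have hmemG : ∀ y, y ∈ G ↔ ∀ i, S (c0Single i) y = 0 := by simp [hG]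
  have hrange : LinearMap.range S.toLinearMap ≤ vanishingSubmodule G := by
    rintro _ ⟨f, rfl⟩ y hy
    exact apply_eq_zero_of_forall_apply_c0Single_eq_zero S ((hmemG y).1 hy) f
  refine ⟨hrange, ?_⟩
  choose x hx using exists_abs_apply_c0Single_eq_one S
  let V := samplingCLM x (fun i => (hx i).le) (vanishingSubmodule G) fun g hg =>
    tendsto_apply_cofinite_of_abs_eq_one S hx fun y hy => hg y ((hmemG y).2 hy)
  let S' := S.toContinuousLinearMap.codRestrict _ fun f => hrange ⟨f, rfl⟩
  have hleft : S'.HasLeftInverse := ⟨V, fun f => by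
    ext i
    have hsq : S (c0Single i) (x i) * S (c0Single i) (x i) = 1 := by
      rw [← abs_mul_abs_self, hx i, one_mul]
    rw [samplingCLM_apply, ContinuousLinearMap.coe_codRestrict_apply,
      LinearIsometry.coe_toContinuousLinearMap, apply_eq_mul_of_abs_eq_one S (hx i) f,
      ← mul_assoc, hsq, one_mul]⟩
  rw [← LinearMap.range_codRestrict]
  exact hleft.closedComplemented_range

theorem stmt1 {K : Type*} [TopologicalSpace K] [CompactSpace K] [T2Space K]
    {I : Type*} [TopologicalSpace I] [DiscreteTopology I]
    (S : C₀(I, ℝ) →ₗᵢ[ℝ] C(K, ℝ))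
    (G : Set K) (hG : G = ⋂ i : I, (fun x => S (c0Single i) x) ⁻¹' {0}) :
    LinearMap.range S.toLinearMap ≤ vanishingSubmodule G ∧
      (Submodule.comap (vanishingSubmodule G).subtype
        (LinearMap.range S.toLinearMap)).ClosedComplemented :=
  stmt1_general S G hG
end
end

section
/- Let K be a compact Hausdorff space having the extension property, let L be a compact Hausdorff scattered space of finite height, and let F be a closed subset of L. Then every isometric copy of C(L|F) in C(K) is complemented; that is, for every linear isometric embedding S : C(L|F) → C(K), the range of S is complemented in C(K). -/
open Filter Topology
open scoped ZeroAtInfty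

noncomputable section

/-!
By Holsztyński's theorem an isometry `S : C(L|F) → C(K)` is a weighted composition off `F`:
there are `x : L → K` and signs `ε` with `S h (x ℓ) = ε ℓ * h ℓ` for `ℓ ∉ F`, and `x` is injective
there. We construct a bounded left inverse `T` of `S` by induction on the height of `L`; then
`S ∘ T` is a bounded projection onto the range of `S`.

Let `B = reducedSet F x ⊆ K` be the closure of `x '' (L' \ F)` together with the accumulation
points of the image of the isolated points of `L` off `F`. Every `h` vanishing on `L'` has
`S h = 0` on `B`, since `h` is small at all but finitely many isolated points; hence `S` descends
to an isometry `S₁ : C(L'|F ∩ L') → C(B)`, which has a left inverse `T₁` by induction as `L'` has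
smaller height. With an extension operator `E` for `B` put
`P f = f - E (f|B) + E (S₁ (T₁ (f|B)))`, and let `T f` (`leftInverseGlue`) be `T₁ (f|B)` on `L'`,
`0` on `F`, and `ε ℓ * P f (x ℓ)` at the remaining isolated points. Since `P f` agrees on `B` with
`S h` for any `h` extending `T₁ (f|B)`, the difference `T f - h` is small at all but finitely many
points, which makes `T f` continuous.
-/

open Set

namespace ContinuousMap

variable {X Y : Type*} [TopologicalSpace X] [CompactSpace X] [TopologicalSpace Y] [CompactSpace Y]

lemma norm_comp_le (f : C(Y, ℝ)) (g : C(X, Y)) : ‖f.comp g‖ ≤ ‖f‖ :=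
  (norm_le _ (norm_nonneg f)).2 fun x => f.norm_coe_le_norm (g x)

def compRightL (g : C(X, Y)) : C(Y, ℝ) →L[ℝ] C(X, ℝ) :=
  LinearMap.mkContinuous
    { toFun := fun f => f.comp g
      map_add' := fun _ _ => rfl
      map_smul' := fun _ _ => rfl }
    1 fun f => by simpa using norm_comp_le f g

def restrictL (s : Set X) [CompactSpace s] : C(X, ℝ) →L[ℝ] C(s, ℝ) :=
  compRightL ((ContinuousMap.id X).restrict s)

@[simp] lemma restrictL_apply (s : Set X) [CompactSpace s] (f : C(X, ℝ)) :
    restrictL s f = f.restrict s := by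
  ext; rfl

lemma norm_restrict_le (s : Set X) [CompactSpace s] (f : C(X, ℝ)) : ‖f.restrict s‖ ≤ ‖f‖ :=
  (norm_le _ (norm_nonneg f)).2 fun x => f.norm_coe_le_norm x

end ContinuousMap

open ContinuousMap

section ExtensionProperty

variable {K : Type*} [TopologicalSpace K]

lemma IsExtensionOperator.apply_val {F : Set K} {E : C(↥F, ℝ) →L[ℝ] C(K, ℝ)}
    (hE : IsExtensionOperator F E) (φ : C(↥F, ℝ)) (z : F) : E φ z = φ z :=
  ContinuousMap.congr_fun (hE φ) z

lemma HasExtensionProperty.hasExtensionOperator (hK : HasExtensionProperty K) {F : Set K}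
    (hF : IsClosed F) : HasExtensionOperator F := by
  rcases F.eq_empty_or_nonempty with rfl | hne
  · exact ⟨0, fun φ => ContinuousMap.ext fun z => z.2.elim⟩
  · exact hK F hne hF

/-- Extensions from `↑F₀ ⊆ K` are restricted back to `B`. -/
lemma HasExtensionProperty.of_isClosed [CompactSpace K] [T2Space K]
    (hK : HasExtensionProperty K) {B : Set K} (hB : IsClosed B) : HasExtensionProperty B := by
  have : CompactSpace B := isCompact_iff_compactSpace.mp hB.isCompact
  intro F₀ hne hF₀
  have hF₁ : IsClosed (Subtype.val '' F₀ : Set K) := hB.isClosedMap_subtype_val _ hF₀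
  have : CompactSpace (Subtype.val '' F₀ : Set K) := isCompact_iff_compactSpace.mp hF₁.isCompact
  have : CompactSpace F₀ := isCompact_iff_compactSpace.mp hF₀.isCompact
  obtain ⟨E, hE⟩ := hK _ (hne.image _) hF₁
  let e : F₀ ≃ₜ (Subtype.val '' F₀ : Set K) :=
    (IsEmbedding.subtypeVal.comp IsEmbedding.subtypeVal).toHomeomorph.trans
      (Homeomorph.setCongr (by ext; simp [Set.range_comp]))
  refine ⟨restrictL B ∘L E ∘L compRightL (e.symm : C(_, ↥F₀)), fun φ => ?_⟩
  ext p
  change E (φ.comp (e.symm : C(_, ↥F₀))) (e p) = φ p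
  rw [hE.apply_val, comp_apply, ContinuousMap.coe_coe, Homeomorph.symm_apply_apply]

end ExtensionProperty

section DerivedSet

variable {X : Type*} [TopologicalSpace X]

lemma isOpen_singleton_iff_notMem_derivedSet_univ {x : X} :
    IsOpen ({x} : Set X) ↔ x ∉ derivedSet (univ : Set X) := by
  rw [isOpen_singleton_iff_punctured_nhds, mem_derivedSet, AccPt, principal_univ, inf_top_eq,
    ← not_neBot]

lemma derivedSet_preimage_val_subset (A s : Set X) :
    derivedSet (Subtype.val ⁻¹' s : Set A) ⊆ Subtype.val ⁻¹' derivedSet s := fun p hp =>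
  derivedSet_mono _ _ (image_preimage_subset _ _)
    (continuous_subtype_val.image_derivedSet Subtype.val_injective ⟨p, hp, rfl⟩)

lemma derivedSet_iterate_univ_subset (A : Set X) (k : ℕ) :
    derivedSet^[k] (univ : Set A) ⊆ Subtype.val ⁻¹' derivedSet^[k] A := by
  induction k with
  | zero => exact fun p _ => p.2
  | succ k ih =>
    rw [Function.iterate_succ_apply', Function.iterate_succ_apply']
    exact (derivedSet_mono _ _ ih).trans (derivedSet_preimage_val_subset _ _)

lemma derivedSet_iterate_univ_derivedSet_eq_empty {n : ℕ}
    (h : derivedSet^[n + 1] (univ : Set X) = ∅) :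
    derivedSet^[n] (univ : Set (derivedSet (univ : Set X))) = ∅ := by
  rw [Function.iterate_succ_apply] at h
  exact eq_empty_of_subset_empty ((derivedSet_iterate_univ_subset _ n).trans
    (by rw [h, preimage_empty]))

lemma eqOn_derivedSet_zero_iff_finite [CompactSpace X] [T1Space X] {A : Set X} (w : C(X, ℝ)) :
    EqOn w 0 (derivedSet A) ↔ ∀ δ > 0, (A ∩ {y | δ ≤ |w y|}).Finite := by
  have hclosed : ∀ δ, IsClosed {y | δ ≤ |w y|} := fun δ =>
    isClosed_le continuous_const w.continuous.abs
  constructor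
  · intro hw δ hδ
    by_contra hinf
    obtain ⟨z, hz⟩ := Set.Infinite.exists_accPt_principal hinf
    have hzA : z ∈ derivedSet A := hz.mono (principal_mono.2 inter_subset_left)
    have hzδ : δ ≤ |w z| := (hclosed δ).closure_subset
      (closure_mono inter_subset_right (derivedSet_subset_closure _ hz))
    rw [hw hzA, Pi.zero_apply, abs_zero] at hzδ
    exact hzδ.not_gt hδ
  · intro hfin z hz
    by_contra hwz
    have hcover : A ⊆ (A ∩ {y | |w z| / 2 ≤ |w y|}) ∪ {y | |w y| ≤ |w z| / 2} := fun y hy =>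
      (le_total (|w z| / 2) |w y|).imp (fun h => ⟨hy, h⟩) id
    have hz' := derivedSet_mono _ _ hcover hz
    rw [derivedSet_union] at hz'
    rcases hz' with hz | hz
    · exact Set.Infinite.of_accPt hz (hfin _ (half_pos (abs_pos.2 hwz)))
    · have : |w z| ≤ |w z| / 2 := (isClosed_le w.continuous.abs continuous_const).closure_subset
        (derivedSet_subset_closure _ hz)
      linarith [abs_pos.2 hwz]

lemma continuous_of_finite_setOf_le_abs [T1Space X] {φ : X → ℝ}
    (h0 : EqOn φ 0 (derivedSet univ)) (hfin : ∀ δ > 0, {x | δ ≤ |φ x|}.Finite) :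
    Continuous φ := by
  refine continuous_iff_continuousAt.2 fun x => ?_
  by_cases hx : x ∈ derivedSet (univ : Set X)
  · rw [ContinuousAt, h0 hx, Pi.zero_apply, Metric.tendsto_nhds]
    intro δ hδ
    filter_upwards [(hfin δ hδ).isClosed.isOpen_compl.mem_nhds (by simp [h0 hx, hδ])] with y hy
    simpa [Real.dist_eq] using hy
  · rw [ContinuousAt, (isOpen_singleton_iff_nhds_eq_pure x).1
      (isOpen_singleton_iff_notMem_derivedSet_univ.2 hx)]
    exact tendsto_pure_nhds _ _

end DerivedSet

section Vanishing

variable {L : Type*} [TopologicalSpace L] {F : Set L}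

lemma norm_vanishingSubmodule [CompactSpace L] (h : vanishingSubmodule F) :
    ‖h‖ = ‖(h : C(L, ℝ))‖ := rfl

def restrictVanishing (F s : Set L) :
    vanishingSubmodule F →ₗ[ℝ] vanishingSubmodule (Subtype.val ⁻¹' F : Set s) where
  toFun h := ⟨(h : C(L, ℝ)).restrict s, fun p hp => h.2 p hp⟩
  map_add' _ _ := rfl
  map_smul' _ _ := rfl

@[simp] lemma restrictVanishing_apply (s : Set L) (h : vanishingSubmodule F) (p : s) :
    (restrictVanishing F s h : C(s, ℝ)) p = (h : C(L, ℝ)) p := rfl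

/-- Tietze extension of `g` glued with `0` on `F`; pasting is legitimate as `g = 0` on `s ∩ F`. -/
lemma exists_restrictVanishing_eq [CompactSpace L] [NormalSpace L] (hF : IsClosed F) {s : Set L}
    (hs : IsClosed s) [CompactSpace s] (g : vanishingSubmodule (Subtype.val ⁻¹' F : Set s)) :
    ∃ h : vanishingSubmodule F, restrictVanishing F s h = g ∧ ‖h‖ ≤ ‖g‖ := by
  classical
  set c := ‖g‖
  let f : L → ℝ := fun ℓ => if hℓ : ℓ ∈ s then (g : C(s, ℝ)) ⟨ℓ, hℓ⟩ else 0
  have hf_s : ∀ p : s, f p = (g : C(s, ℝ)) p := fun p => dif_pos p.2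
  have hf_F : ∀ ℓ ∈ F, f ℓ = 0 := fun ℓ hℓ => by
    by_cases hs' : ℓ ∈ s
    · exact (dif_pos hs').trans (g.2 ⟨ℓ, hs'⟩ hℓ)
    · exact dif_neg hs'
  have hcont : ContinuousOn f (s ∪ F) := by
    refine ContinuousOn.union_of_isClosed ?_ ?_ hs hF
    · rw [continuousOn_iff_continuous_domRestrict]
      exact (g : C(s, ℝ)).continuous.congr fun p => (hf_s p).symm
    · exact continuousOn_const.congr hf_F
  have hbound : ∀ ℓ, f ℓ ∈ Icc (-c) c := fun ℓ => by
    rw [mem_Icc, ← abs_le, ← Real.norm_eq_abs]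
    by_cases hs' : ℓ ∈ s
    · exact (hf_s ⟨ℓ, hs'⟩).symm ▸ (g : C(s, ℝ)).norm_coe_le_norm _
    · simp [f, hs', c]
  obtain ⟨h, hhc, hh⟩ := ContinuousMap.exists_restrict_eq_forall_mem_of_closed
    ⟨_, continuousOn_iff_continuous_domRestrict.1 hcont⟩ (fun p => hbound p)
    (nonempty_Icc.2 (neg_le_self (norm_nonneg g))) (hs.union hF)
  have hh' : ∀ ℓ ∈ s ∪ F, h ℓ = f ℓ := fun ℓ hℓ => ContinuousMap.congr_fun hh ⟨ℓ, hℓ⟩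
  refine ⟨⟨h, fun ℓ hℓ => (hh' ℓ (.inr hℓ)).trans (hf_F ℓ hℓ)⟩, ?_, ?_⟩
  · ext p
    exact (hh' p (.inl p.2)).trans (hf_s p)
  · refine (ContinuousMap.norm_le _ (norm_nonneg _)).2 fun ℓ => ?_
    rw [Real.norm_eq_abs, abs_le]
    exact hhc ℓ

end Vanishing

lemma LinearIsometry.apply_eq_of_norm_le_one {K E : Type*} [TopologicalSpace K] [CompactSpace K]
    [SeminormedAddCommGroup E] [NormedSpace ℝ E] (S : E →ₗᵢ[ℝ] C(K, ℝ)) {u v : E}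
    (hv : ‖v‖ ≤ 1) (huv : ‖(2 : ℝ) • u - v‖ ≤ 1) {y : K} (hy : |S u y| = 1) :
    S v y = S u y := by
  -- `S u y = ±1` is an extreme point of `[-1, 1]` and the midpoint of `S v y`, `S (2u - v) y`.
  have hb : |S v y| ≤ 1 := by
    simpa [← Real.norm_eq_abs] using ((S v).norm_coe_le_norm y).trans ((S.norm_map v).trans_le hv)
  have hab : |2 * S u y - S v y| ≤ 1 := by
    have := ((S _).norm_coe_le_norm y).trans ((S.norm_map ((2 : ℝ) • u - v)).trans_le huv)
    simpa [← Real.norm_eq_abs] using this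
  rw [abs_le] at hb hab
  rcases abs_eq (zero_le_one' ℝ) |>.1 hy with ha | ha <;> rw [ha] at hab ⊢ <;> linarith

lemma ContinuousMap.exists_abs_apply_eq_norm {X : Type*} [TopologicalSpace X] [CompactSpace X]
    [Nonempty X] (f : C(X, ℝ)) : ∃ x, |f x| = ‖f‖ := by
  obtain ⟨x, -, hx⟩ := isCompact_univ.exists_isMaxOn univ_nonempty f.continuous.abs.continuousOn
  refine ⟨x, le_antisymm (by simpa using f.norm_coe_le_norm x) ?_⟩
  exact (f.norm_le (abs_nonneg _)).2 fun z => hx (mem_univ z)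

lemma ContinuousMap.norm_add_smul_le {X : Type*} [TopologicalSpace X] [CompactSpace X]
    {h u : C(X, ℝ)} {c t : ℝ} (ht : 0 ≤ t) (hu : ∀ m, u m ∈ Icc 0 1)
    (hsupp : ∀ m, c ≤ h m → u m = 0) (hh : ‖h‖ ≤ t + c) : ‖h + t • u‖ ≤ t + c := by
  refine ((h + t • u).norm_le ((norm_nonneg h).trans hh)).2 fun m => ?_
  have hm := abs_le.1 ((Real.norm_eq_abs _).symm.trans_le ((h.norm_coe_le_norm m).trans hh))
  rw [Real.norm_eq_abs, add_apply, smul_apply, smul_eq_mul, abs_le]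
  by_cases hcm : c ≤ h m
  · rw [hsupp m hcm, mul_zero, add_zero]; exact hm
  · have := hu m
    have := mul_le_of_le_one_right ht this.2
    constructor <;> nlinarith [mul_nonneg ht (hu m).1]

section Holsztynski

variable {K L : Type*} [TopologicalSpace K] [CompactSpace K] [TopologicalSpace L] {F : Set L}

def peakFunctions (F : Set L) (ℓ : L) : Set (vanishingSubmodule F) :=
  {u | (∀ m, (u : C(L, ℝ)) m ∈ Icc 0 1) ∧ (u : C(L, ℝ)) ℓ = 1}

lemma exists_mem_peakFunctions [NormalSpace L] [T1Space L] (hF : IsClosed F) {ℓ : L}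
    (hℓ : ℓ ∉ F) {V : Set L} (hV : IsOpen V) (hℓV : ℓ ∈ V) :
    ∃ u ∈ peakFunctions F ℓ, ∀ m ∉ V, (u : C(L, ℝ)) m = 0 := by
  obtain ⟨u, hu0, hu1, hu⟩ := exists_continuous_zero_one_of_isClosed
    (hF.union hV.isClosed_compl) isClosed_singleton
    (disjoint_singleton_right.2 fun h => h.elim hℓ (· hℓV))
  exact ⟨⟨u, fun m hm => hu0 (.inl hm)⟩, ⟨hu, hu1 rfl⟩, fun m hm => hu0 (.inr hm)⟩

lemma norm_eq_one_of_mem_peakFunctions [CompactSpace L] {ℓ : L} {u : vanishingSubmodule F}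
    (hu : u ∈ peakFunctions F ℓ) : ‖u‖ = 1 := by
  refine le_antisymm (((u : C(L, ℝ)).norm_le zero_le_one).2 fun m => ?_) ?_
  · rw [Real.norm_eq_abs, abs_le]
    exact ⟨by linarith [(hu.1 m).1], (hu.1 m).2⟩
  · simpa [hu.2] using (u : C(L, ℝ)).norm_coe_le_norm ℓ

lemma inf_mem_peakFunctions {ℓ : L} {u v : vanishingSubmodule F} (hu : u ∈ peakFunctions F ℓ)
    (hv : v ∈ peakFunctions F ℓ) :
    (⟨(u : C(L, ℝ)) ⊓ v, fun m hm => by simp [u.2 m hm, v.2 m hm]⟩ : vanishingSubmodule F) ∈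
      peakFunctions F ℓ :=
  ⟨fun m => ⟨le_inf (hu.1 m).1 (hv.1 m).1, inf_le_left.trans (hu.1 m).2⟩, by simp [hu.2, hv.2]⟩

/-- `0 ≤ u ≤ v ≤ 1` gives `‖v‖ ≤ 1` and `‖2u - v‖ ≤ 1`. -/
lemma apply_eq_apply_of_le [CompactSpace L] (S : vanishingSubmodule F →ₗᵢ[ℝ] C(K, ℝ))
    {u v : vanishingSubmodule F} (hu : ∀ m, 0 ≤ (u : C(L, ℝ)) m)
    (huv : ∀ m, (u : C(L, ℝ)) m ≤ (v : C(L, ℝ)) m) (hv : ∀ m, (v : C(L, ℝ)) m ≤ 1) {y : K}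
    (hy : |S u y| = 1) : S v y = S u y := by
  refine LinearIsometry.apply_eq_of_norm_le_one (u := u) S ?_ ?_ hy <;>
    rw [norm_vanishingSubmodule] <;>
    refine ((ContinuousMap.norm_le _ zero_le_one).2 fun m => ?_) <;>
    simp only [Submodule.coe_sub, Submodule.coe_smul, ContinuousMap.sub_apply,
      ContinuousMap.smul_apply, smul_eq_mul, Real.norm_eq_abs, abs_le] <;>
    constructor <;> linarith [hu m, huv m, hv m]

variable [CompactSpace L] [T2Space L]

/-- The peak sets `{y | |S u y| = 1}`, `u ∈ peakFunctions F ℓ`, are closed, nonempty and directed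
under `⊓`; at a common point all `S u` agree. -/
lemma exists_apply_eq_of_mem_peakFunctions (hF : IsClosed F) {ℓ : L} (hℓ : ℓ ∉ F)
    (S : vanishingSubmodule F →ₗᵢ[ℝ] C(K, ℝ)) :
    ∃ y e, |e| = 1 ∧ ∀ u ∈ peakFunctions F ℓ, S u y = e := by
  obtain ⟨u₀, hu₀, -⟩ := exists_mem_peakFunctions hF hℓ isOpen_univ (mem_univ ℓ)
  have hSu : ∀ u ∈ peakFunctions F ℓ, ‖S u‖ = 1 := fun u hu =>
    (S.norm_map u).trans (norm_eq_one_of_mem_peakFunctions hu)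
  have : Nonempty K := by
    by_contra hK
    rw [not_nonempty_iff] at hK
    simpa [Subsingleton.elim (S u₀) 0] using hSu u₀ hu₀
  have : Nonempty (peakFunctions F ℓ) := ⟨⟨u₀, hu₀⟩⟩
  let C : peakFunctions F ℓ → Set K := fun u => {y | |S u y| = 1}
  let inf : peakFunctions F ℓ → peakFunctions F ℓ → peakFunctions F ℓ := fun u v =>
    ⟨_, inf_mem_peakFunctions u.2 v.2⟩
  have hinf : ∀ u v, ∀ y ∈ C (inf u v), S u y = S (inf u v) y ∧ S v y = S (inf u v) y :=
    fun u v y hy => ⟨apply_eq_apply_of_le S (fun m => ((inf u v).2.1 m).1)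
      (fun _ => inf_le_left) (fun m => (u.2.1 m).2) hy, apply_eq_apply_of_le S
      (fun m => ((inf u v).2.1 m).1) (fun _ => inf_le_right) (fun m => (v.2.1 m).2) hy⟩
  have hclosed : ∀ u, IsClosed (C u) := fun u =>
    isClosed_singleton.preimage (S u).continuous.abs
  obtain ⟨y, hy⟩ := IsCompact.nonempty_iInter_of_directed_nonempty_isCompact_isClosed C
    (fun u v => ⟨inf u v, fun y hy => show _ = _ by rw [(hinf u v y hy).1]; exact hy,
      fun y hy => show _ = _ by rw [(hinf u v y hy).2]; exact hy⟩)
    (fun u => ((S u).exists_abs_apply_eq_norm).imp fun y hy => hy.trans (hSu u u.2))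
    (fun u => (hclosed u).isCompact) hclosed
  have hyC : ∀ u, y ∈ C u := mem_iInter.1 hy
  refine ⟨y, S u₀ y, hyC ⟨u₀, hu₀⟩, fun u hu => ?_⟩
  obtain ⟨h₁, h₂⟩ := hinf ⟨u, hu⟩ ⟨u₀, hu₀⟩ y (hyC _)
  exact h₁.trans h₂.symm

/-- Test `S` on `h + t • u` with `t = 2‖h‖` and a peak function `u` supported where
`h < h ℓ + δ`. -/
lemma mul_apply_le_of_apply_eq (hF : IsClosed F) {ℓ : L} (hℓ : ℓ ∉ F)
    (S : vanishingSubmodule F →ₗᵢ[ℝ] C(K, ℝ)) {y : K} {e : ℝ} (he : |e| = 1)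
    (hpeak : ∀ u ∈ peakFunctions F ℓ, S u y = e) (h : vanishingSubmodule F) {δ : ℝ}
    (hδ : 0 < δ) : e * S h y ≤ (h : C(L, ℝ)) ℓ + δ := by
  set c := (h : C(L, ℝ)) ℓ + δ
  obtain ⟨u, hu, hu0⟩ := exists_mem_peakFunctions hF hℓ
    (isOpen_lt (h : C(L, ℝ)).continuous continuous_const) (show _ < c by linarith)
  set t := 2 * ‖h‖
  have hnorm : ‖h + t • u‖ ≤ t + c :=
    norm_add_smul_le (by positivity) hu.1 (fun m hm => hu0 m (not_lt.2 hm))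
      (by linarith [neg_norm_le_apply (h : C(L, ℝ)) ℓ, norm_vanishingSubmodule h])
  have hee : e * e = 1 := by rw [← abs_mul_abs_self, he, one_mul]
  calc e * S h y = e * S (h + t • u) y - t := by
        rw [map_add, map_smul, ContinuousMap.add_apply, ContinuousMap.smul_apply, hpeak u hu,
          smul_eq_mul]
        linear_combination (-t) * hee
    _ ≤ ‖S (h + t • u)‖ - t := by
        gcongr
        exact (le_abs_self _).trans ((abs_mul _ _).trans_le (by
          rw [he, one_mul, ← Real.norm_eq_abs]; exact norm_coe_le_norm _ _))
    _ ≤ c := by rw [S.norm_map]; linarith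

lemma apply_eq_mul_of_apply_eq (hF : IsClosed F) {ℓ : L} (hℓ : ℓ ∉ F)
    (S : vanishingSubmodule F →ₗᵢ[ℝ] C(K, ℝ)) {y : K} {e : ℝ} (he : |e| = 1)
    (hpeak : ∀ u ∈ peakFunctions F ℓ, S u y = e) (h : vanishingSubmodule F) :
    S h y = e * (h : C(L, ℝ)) ℓ := by
  have hle : e * S h y ≤ (h : C(L, ℝ)) ℓ := le_of_forall_pos_le_add fun δ hδ =>
    mul_apply_le_of_apply_eq hF hℓ S he hpeak h hδ
  have hge : (h : C(L, ℝ)) ℓ ≤ e * S h y := by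
    refine le_of_forall_pos_le_add fun δ hδ => ?_
    have := mul_apply_le_of_apply_eq hF hℓ S he hpeak (-h) hδ
    rw [S.map_neg, ContinuousMap.neg_apply, Submodule.coe_neg, ContinuousMap.neg_apply] at this
    linarith
  have hee : e * e = 1 := by rw [← abs_mul_abs_self, he, one_mul]
  calc S h y = e * (e * S h y) := by rw [← mul_assoc, hee, one_mul]
    _ = e * (h : C(L, ℝ)) ℓ := by rw [le_antisymm hle hge]

end Holsztynski

section WeightedComposition

variable {K L : Type*} [TopologicalSpace K] [TopologicalSpace L] {F : Set L}

def reducedSet (F : Set L) (x : L → K) : Set K :=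
  closure (x '' (derivedSet univ \ F)) ∪ derivedSet (x '' ((derivedSet univ)ᶜ \ F))

lemma isClosed_reducedSet [T1Space K] (x : L → K) : IsClosed (reducedSet F x) :=
  isClosed_closure.union (isClosed_derivedSet _)

instance [CompactSpace K] [T1Space K] (x : L → K) : CompactSpace (reducedSet F x) :=
  isCompact_iff_compactSpace.mp (isClosed_reducedSet x).isCompact

instance {X : Type*} [TopologicalSpace X] [CompactSpace X] [T1Space X] (A : Set X) :
    CompactSpace (derivedSet A) :=
  isCompact_iff_compactSpace.mp (isClosed_derivedSet A).isCompact

def leftInverseGlue (F : Set L) (x : L → K) (ε : L → ℝ) (g : C(derivedSet (univ : Set L), ℝ))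
    (w : C(K, ℝ)) (ℓ : L) : ℝ :=
  open Classical in
  if hℓ : ℓ ∈ derivedSet univ then g ⟨ℓ, hℓ⟩ else if ℓ ∈ F then 0 else ε ℓ * w (x ℓ)

lemma leftInverseGlue_add (x : L → K) (ε : L → ℝ) (g g' : C(derivedSet (univ : Set L), ℝ))
    (w w' : C(K, ℝ)) :
    leftInverseGlue F x ε (g + g') (w + w') =
      leftInverseGlue F x ε g w + leftInverseGlue F x ε g' w' := by
  ext ℓ
  simp only [leftInverseGlue, Pi.add_apply]
  split_ifs <;> simp [mul_add]

lemma leftInverseGlue_smul (x : L → K) (ε : L → ℝ) (c : ℝ) (g : C(derivedSet (univ : Set L), ℝ))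
    (w : C(K, ℝ)) : leftInverseGlue F x ε (c • g) (c • w) = c • leftInverseGlue F x ε g w := by
  ext ℓ
  simp only [leftInverseGlue, Pi.smul_apply]
  split_ifs <;> simp [mul_left_comm]

lemma leftInverseGlue_eq_zero_of_mem {x : L → K} {ε : L → ℝ} {g : C(derivedSet (univ : Set L), ℝ)}
    (hg : ∀ p : derivedSet (univ : Set L), (p : L) ∈ F → g p = 0) (w : C(K, ℝ)) {ℓ : L}
    (hℓ : ℓ ∈ F) : leftInverseGlue F x ε g w ℓ = 0 := by
  by_cases hM : ℓ ∈ derivedSet univ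
  · simp [leftInverseGlue, hM, hg ⟨ℓ, hM⟩ hℓ]
  · simp [leftInverseGlue, hM, hℓ]

variable [CompactSpace K] [CompactSpace L]

structure IsWeightedComposition (S : vanishingSubmodule F →ₗᵢ[ℝ] C(K, ℝ)) (x : L → K)
    (ε : L → ℝ) : Prop where
  abs_eq_one : ∀ ℓ ∉ F, |ε ℓ| = 1
  apply_eq : ∀ ℓ ∉ F, ∀ h : vanishingSubmodule F, S h (x ℓ) = ε ℓ * (h : C(L, ℝ)) ℓ

/-- **Holsztyński's theorem** for isometries defined on `C(L|F)`. -/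
theorem exists_isWeightedComposition [T2Space L] [Nonempty K] (hF : IsClosed F)
    (S : vanishingSubmodule F →ₗᵢ[ℝ] C(K, ℝ)) : ∃ x ε, IsWeightedComposition S x ε := by
  have : ∀ ℓ, ∃ p : K × ℝ, ℓ ∉ F →
      |p.2| = 1 ∧ ∀ h : vanishingSubmodule F, S h p.1 = p.2 * (h : C(L, ℝ)) ℓ := fun ℓ => by
    by_cases hℓ : ℓ ∈ F
    · exact ⟨(Classical.arbitrary K, 0), fun h => (h hℓ).elim⟩
    · obtain ⟨y, e, he, hpeak⟩ := exists_apply_eq_of_mem_peakFunctions hF hℓ S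
      exact ⟨(y, e), fun _ => ⟨he, apply_eq_mul_of_apply_eq hF hℓ S he hpeak⟩⟩
  choose p hp using this
  exact ⟨fun ℓ => (p ℓ).1, fun ℓ => (p ℓ).2, fun ℓ hℓ => (hp ℓ hℓ).1, fun ℓ hℓ => (hp ℓ hℓ).2⟩

namespace IsWeightedComposition

variable {S : vanishingSubmodule F →ₗᵢ[ℝ] C(K, ℝ)} {x : L → K} {ε : L → ℝ}

lemma mul_self_eq_one (hS : IsWeightedComposition S x ε) {ℓ : L} (hℓ : ℓ ∉ F) :
    ε ℓ * ε ℓ = 1 := by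
  rw [← abs_mul_abs_self, hS.abs_eq_one ℓ hℓ, one_mul]

lemma abs_apply (hS : IsWeightedComposition S x ε) {ℓ : L} (hℓ : ℓ ∉ F)
    (h : vanishingSubmodule F) : |S h (x ℓ)| = |(h : C(L, ℝ)) ℓ| := by
  rw [hS.apply_eq ℓ hℓ, abs_mul, hS.abs_eq_one ℓ hℓ, one_mul]

lemma injOn [T2Space L] (hS : IsWeightedComposition S x ε) (hF : IsClosed F) : InjOn x Fᶜ := by
  intro ℓ hℓ m hm hx
  by_contra hne
  obtain ⟨u, hu, hum⟩ := exists_mem_peakFunctions hF hℓ isOpen_compl_singleton hne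
  have := hS.apply_eq ℓ hℓ u
  rw [hx, hS.apply_eq m hm u, hum m (not_not.2 rfl), hu.2, mul_zero, mul_one] at this
  simpa [← this] using hS.abs_eq_one ℓ hℓ

lemma apply_eq_zero_of_mem_reducedSet [T1Space K] [T1Space L]
    (hS : IsWeightedComposition S x ε) {h : vanishingSubmodule F}
    (hh : EqOn (h : C(L, ℝ)) 0 (derivedSet univ)) {z : K} (hz : z ∈ reducedSet F x) :
    S h z = 0 := by
  rcases hz with hz | hz
  · refine EqOn.closure (fun _ hy => ?_) (S h).continuous continuous_const hz
    obtain ⟨ℓ, hℓ, rfl⟩ := hy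
    rw [hS.apply_eq ℓ hℓ.2, hh hℓ.1, Pi.zero_apply, mul_zero]
  · refine (eqOn_derivedSet_zero_iff_finite (S h)).2 (fun δ hδ => ?_) hz
    refine (((eqOn_derivedSet_zero_iff_finite _).1 hh δ hδ).image x).subset ?_
    rintro _ ⟨⟨ℓ, hℓ, rfl⟩, hδℓ⟩
    exact ⟨ℓ, ⟨mem_univ ℓ, (hS.abs_apply hℓ.2 h).symm.trans_ge hδℓ⟩, rfl⟩

lemma abs_leftInverseGlue_le [T1Space L] (hS : IsWeightedComposition S x ε)
    (g : C(derivedSet (univ : Set L), ℝ)) (w : C(K, ℝ)) (ℓ : L) :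
    |leftInverseGlue F x ε g w ℓ| ≤ ‖g‖ + ‖w‖ := by
  have hg := norm_nonneg g
  have hw := norm_nonneg w
  unfold leftInverseGlue
  split_ifs with hM hF
  · have := g.norm_coe_le_norm ⟨ℓ, hM⟩
    rw [Real.norm_eq_abs] at this
    linarith
  · simp only [abs_zero]; positivity
  · have := w.norm_coe_le_norm (x ℓ)
    rw [Real.norm_eq_abs] at this
    rw [abs_mul, hS.abs_eq_one ℓ hF, one_mul]
    linarith

lemma leftInverseGlue_restrictVanishing (hS : IsWeightedComposition S x ε)
    (h : vanishingSubmodule F) :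
    leftInverseGlue F x ε (restrictVanishing F (derivedSet univ) h) (S h) = h := by
  ext ℓ
  unfold leftInverseGlue
  split_ifs with hM hF
  · rfl
  · exact (h.2 ℓ hF).symm
  · rw [hS.apply_eq ℓ hF, ← mul_assoc, hS.mul_self_eq_one hF, one_mul]

end IsWeightedComposition

end WeightedComposition

section Reduction

variable {K L : Type*} [TopologicalSpace K] [CompactSpace K] [T2Space K] [TopologicalSpace L]
  [CompactSpace L] [T2Space L] {F : Set L} {S : vanishingSubmodule F →ₗᵢ[ℝ] C(K, ℝ)}
  {x : L → K} {ε : L → ℝ}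

local notation "M" => derivedSet (univ : Set L)

/-- Restriction to `L'` is onto, with norm control, and its kernel is killed by `S` followed by
restriction to `reducedSet F x`; so `S` descends to an isometry. -/
lemma IsWeightedComposition.exists_linearIsometry_restrict (hS : IsWeightedComposition S x ε)
    (hF : IsClosed F) :
    ∃ S₁ : vanishingSubmodule (Subtype.val ⁻¹' F : Set M) →ₗᵢ[ℝ] C(reducedSet F x, ℝ),
      ∀ h, S₁ (restrictVanishing F M h) = (S h).restrict (reducedSet F x) := by
  set B := reducedSet F x
  have hsurj : Function.Surjective (restrictVanishing F M) := fun g =>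
    (exists_restrictVanishing_eq hF (isClosed_derivedSet _) g).imp fun _ h => h.1
  have hker : LinearMap.ker (restrictVanishing F M) ≤
      LinearMap.ker ((restrictL B).toLinearMap ∘ₗ S.toLinearMap) := fun h hh => by
    ext z
    refine hS.apply_eq_zero_of_mem_reducedSet (fun m hm => ?_) z.2
    simpa using ContinuousMap.congr_fun (congrArg Subtype.val (LinearMap.mem_ker.1 hh)) ⟨m, hm⟩
  set S₁ := (LinearMap.ker (restrictVanishing F M)).liftQ _ hker ∘ₗ
    ((restrictVanishing F M).quotKerEquivOfSurjective hsurj).symm.toLinearMap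
  have hS₁ : ∀ h, S₁ (restrictVanishing F M h) = (S h).restrict B := fun h => by
    simp [S₁]
  refine ⟨⟨S₁, fun g => le_antisymm ?_ ?_⟩, hS₁⟩
  · obtain ⟨h, rfl, hh⟩ := exists_restrictVanishing_eq hF (isClosed_derivedSet _) g
    calc ‖S₁ (restrictVanishing F M h)‖ = ‖(S h).restrict B‖ := by rw [hS₁]
      _ ≤ ‖S h‖ := ContinuousMap.norm_restrict_le _ _
      _ = ‖h‖ := S.norm_map h
      _ ≤ _ := hh
  · refine ((g : C(M, ℝ)).norm_le (norm_nonneg _)).2 fun p => ?_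
    by_cases hpF : (p : L) ∈ F
    · simp [g.2 p hpF]
    obtain ⟨h, rfl⟩ := hsurj g
    have hxB : x p ∈ B := .inl (subset_closure ⟨p, ⟨p.2, hpF⟩, rfl⟩)
    calc ‖(restrictVanishing F M h : C(M, ℝ)) p‖ = ‖S₁ (restrictVanishing F M h) ⟨x p, hxB⟩‖ := by
          rw [hS₁, ContinuousMap.restrict_apply, restrictVanishing_apply, Real.norm_eq_abs,
            Real.norm_eq_abs, hS.abs_apply hpF]
      _ ≤ _ := norm_coe_le_norm _ _

namespace IsWeightedComposition

lemma continuous_leftInverseGlue_zero (hS : IsWeightedComposition S x ε) (hF : IsClosed F)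
    {w : C(K, ℝ)} (hw : EqOn w 0 (derivedSet (x '' ((derivedSet univ)ᶜ \ F)))) :
    Continuous (leftInverseGlue F x ε 0 w) := by
  refine continuous_of_finite_setOf_le_abs (fun ℓ hℓ => by simp [leftInverseGlue, hℓ])
    fun δ hδ => ?_
  set T := ((derivedSet univ)ᶜ \ F) ∩ x ⁻¹' {y | δ ≤ |w y|}
  have hT : T.Finite := Finite.of_finite_image
    (((eqOn_derivedSet_zero_iff_finite w).1 hw δ hδ).subset (image_inter_preimage _ _ _).subset)
    ((hS.injOn hF).mono fun ℓ hℓ => hℓ.1.2)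
  refine hT.subset fun ℓ (hℓ : δ ≤ |leftInverseGlue F x ε 0 w ℓ|) => ?_
  unfold leftInverseGlue at hℓ
  split_ifs at hℓ with hM hFℓ
  · rw [ContinuousMap.zero_apply, abs_zero] at hℓ; linarith
  · rw [abs_zero] at hℓ; linarith
  · rw [abs_mul, hS.abs_eq_one ℓ hFℓ, one_mul] at hℓ
    exact ⟨⟨hM, hFℓ⟩, hℓ⟩

lemma continuous_leftInverseGlue (hS : IsWeightedComposition S x ε) (hF : IsClosed F)
    {S₁ : vanishingSubmodule (Subtype.val ⁻¹' F : Set M) →ₗᵢ[ℝ] C(reducedSet F x, ℝ)}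
    (hS₁ : ∀ h, S₁ (restrictVanishing F M h) = (S h).restrict (reducedSet F x))
    {g : vanishingSubmodule (Subtype.val ⁻¹' F : Set M)} {w : C(K, ℝ)}
    (hgw : w.restrict (reducedSet F x) = S₁ g) : Continuous (leftInverseGlue F x ε g w) := by
  obtain ⟨h, rfl, -⟩ := exists_restrictVanishing_eq hF (isClosed_derivedSet _) g
  have hsplit : leftInverseGlue F x ε (restrictVanishing F M h) w =
      h + leftInverseGlue F x ε 0 (w - S h) := by
    rw [← hS.leftInverseGlue_restrictVanishing h, ← leftInverseGlue_add, add_zero, add_sub_cancel]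
  rw [hsplit]
  refine (h : C(L, ℝ)).continuous.add (hS.continuous_leftInverseGlue_zero hF fun z hz => ?_)
  have := ContinuousMap.congr_fun (hgw.trans (hS₁ h)) ⟨z, .inr hz⟩
  simpa [sub_eq_zero] using this

end IsWeightedComposition

/-- `P f := f - E (f|B) + E (S₁ (T₁ (f|B)))` fixes the range of `S` and agrees with
`S₁ (T₁ (f|B))` on `B`, which makes `leftInverseGlue F x ε (T₁ (f|B)) (P f)` continuous. -/
theorem IsWeightedComposition.exists_leftInverse (hS : IsWeightedComposition S x ε)
    (hF : IsClosed F)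
    {S₁ : vanishingSubmodule (Subtype.val ⁻¹' F : Set M) →ₗᵢ[ℝ] C(reducedSet F x, ℝ)}
    (hS₁ : ∀ h, S₁ (restrictVanishing F M h) = (S h).restrict (reducedSet F x))
    {E : C(reducedSet F x, ℝ) →L[ℝ] C(K, ℝ)} (hE : IsExtensionOperator _ E)
    {T₁ : C(reducedSet F x, ℝ) →L[ℝ] vanishingSubmodule (Subtype.val ⁻¹' F : Set M)}
    (hT₁ : ∀ g, T₁ (S₁ g) = g) :
    ∃ T : C(K, ℝ) →L[ℝ] vanishingSubmodule F, ∀ h, T (S h) = h := by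
  set G := T₁ ∘L restrictL (reducedSet F x)
  set P : C(K, ℝ) →L[ℝ] C(K, ℝ) :=
    .id ℝ _ - E ∘L restrictL (reducedSet F x) + E ∘L S₁.toContinuousLinearMap ∘L G
  have hP : ∀ f, (P f).restrict (reducedSet F x) = S₁ (G f) := fun f => by
    ext z
    simp [P, hE.apply_val]
  have hGS : ∀ h, G (S h) = restrictVanishing F M h := fun h => by
    simp [G, ← hS₁, hT₁]
  have hPS : ∀ h, P (S h) = S h := fun h => by
    simp [P, hGS, hS₁]
  let T : C(K, ℝ) →ₗ[ℝ] vanishingSubmodule F :=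
    { toFun f := ⟨⟨leftInverseGlue F x ε (G f) (P f), hS.continuous_leftInverseGlue hF hS₁ (hP f)⟩,
        fun ℓ hℓ => leftInverseGlue_eq_zero_of_mem (G f).2 _ hℓ⟩
      map_add' f f' := by
        ext ℓ
        simp [leftInverseGlue_add]
      map_smul' c f := by
        ext ℓ
        simp [leftInverseGlue_smul] }
  -- Maps into the submodule carry no operator norm instance; bound through `C(L', ℝ)` instead.
  set G' := (vanishingSubmodule _).subtypeL ∘L G
  refine ⟨T.mkContinuous (‖G'‖ + ‖P‖) fun f => ?_, fun h => ?_⟩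
  · refine (ContinuousMap.norm_le _ (by positivity)).2 fun ℓ => ?_
    calc ‖leftInverseGlue F x ε (G' f) (P f) ℓ‖ ≤ ‖G' f‖ + ‖P f‖ := hS.abs_leftInverseGlue_le _ _ ℓ
      _ ≤ ‖G'‖ * ‖f‖ + ‖P‖ * ‖f‖ := add_le_add (G'.le_opNorm f) (P.le_opNorm f)
      _ = _ := by ring
  · ext ℓ
    simp [T, hGS, hPS, hS.leftInverseGlue_restrictVanishing]

end Reduction

theorem hasLeftInverse_of_derivedSet_iterate_eq_empty (n : ℕ) {K L : Type*}
    [TopologicalSpace K] [CompactSpace K] [T2Space K]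
    [TopologicalSpace L] [CompactSpace L] [T2Space L]
    (hK : HasExtensionProperty K) (hL : derivedSet^[n] (univ : Set L) = ∅) {F : Set L}
    (hF : IsClosed F) (S : vanishingSubmodule F →ₗᵢ[ℝ] C(K, ℝ)) :
    S.toContinuousLinearMap.HasLeftInverse := by
  induction n generalizing K L with
  | zero =>
    have : IsEmpty L := univ_eq_empty_iff.1 hL
    exact ⟨0, fun h => Subtype.ext (ContinuousMap.ext isEmptyElim)⟩
  | succ n ih =>
    by_cases hFL : ∀ ℓ, ℓ ∈ F
    · exact ⟨0, fun h => Subtype.ext (ContinuousMap.ext fun ℓ => (h.2 ℓ (hFL ℓ)).symm)⟩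
    obtain ⟨ℓ₀, hℓ₀⟩ := not_forall.1 hFL
    have : Nonempty K := (exists_apply_eq_of_mem_peakFunctions hF hℓ₀ S).nonempty
    obtain ⟨x, ε, hS⟩ := exists_isWeightedComposition hF S
    obtain ⟨S₁, hS₁⟩ := hS.exists_linearIsometry_restrict hF
    obtain ⟨E, hE⟩ := hK.hasExtensionOperator (isClosed_reducedSet x)
    obtain ⟨T₁, hT₁⟩ := ih (hK.of_isClosed (isClosed_reducedSet x))
      (derivedSet_iterate_univ_derivedSet_eq_empty hL) (hF.preimage continuous_subtype_val) S₁
    exact hS.exists_leftInverse hF hS₁ hE hT₁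

theorem stmt2 {K : Type*} [TopologicalSpace K] [CompactSpace K] [T2Space K]
    {L : Type*} [TopologicalSpace L] [CompactSpace L] [T2Space L]
    (hK : HasExtensionProperty K)
    (hL : ∃ n : ℕ, derivedSet^[n] (Set.univ : Set L) = ∅)
    (F : Set L) (hF : IsClosed F)
    (S : ↥(vanishingSubmodule F) →ₗᵢ[ℝ] C(K, ℝ)) :
    (LinearMap.range S.toLinearMap).ClosedComplemented := by
  obtain ⟨n, hn⟩ := hL
  exact (hasLeftInverse_of_derivedSet_iterate_eq_empty n hK hn hF S).closedComplemented_range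
end
end

section
/- Every nonempty compact metrizable space has the regular extension property; that is, if K is a nonempty compact metrizable space and F is a nonempty closed subset of K, then there exists a bounded linear map E_F : C(F) → C(K) with ρ_F ∘ E_F = id, ‖E_F‖ ≤ 1, and E_F(1_F) = 1_K. -/
open Filter Topology
open scoped ZeroAtInfty

noncomputable section

/-! Dugundji's construction. Cover `K \ F` by the balls `B(i, d(i, F) / 4)`, take a partition of
unity `(φᵢ)` on `K \ F` subordinate to them and pick `aᵢ ∈ F` with `d(i, aᵢ) < 2 d(i, F)`. Put
`E f = f` on `F` and `E f x = ∑ᵢ φᵢ(x) f(aᵢ)` off `F`. Off `F` the value `E f x` is a convex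
combination of values of `f`, which gives `‖E‖ ≤ 1` and `E 1 = 1`; every `aᵢ` contributing at `x`
lies within `3 d(x, F)` of `x`, which makes `E f` continuous at the points of `F`. -/

open Set Metric Function

theorem PartitionOfUnity.finite_support_smul {ι X : Type*} [TopologicalSpace X] {s : Set X}
    (ρ : PartitionOfUnity ι X s) (x : X) (c : ι → ℝ) : (support fun i => ρ i x • c i).Finite :=
  (ρ.locallyFinite.point_finite x).subset fun _ hi => left_ne_zero_of_mul hi

namespace Dugundji

variable {K : Type*} [MetricSpace K] {F : Set K}

def AnchorsNear (φ : PartitionOfUnity (↥Fᶜ) (↥Fᶜ)) (a : ↥Fᶜ → F) : Prop :=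
  ∀ i x, φ i x ≠ 0 → dist (a i : K) x ≤ 3 * infDist (x : K) F

theorem exists_anchorsNear (hF : IsClosed F) (hne : F.Nonempty) :
    ∃ (φ : PartitionOfUnity (↥Fᶜ) (↥Fᶜ)) (a : ↥Fᶜ → F), AnchorsNear φ a := by
  have hpos : ∀ i : ↥Fᶜ, 0 < infDist (i : K) F := fun i => (hF.notMem_iff_infDist_pos hne).1 i.2
  have hanchor : ∀ i : ↥Fᶜ, ∃ y ∈ F, dist (i : K) y < 2 * infDist (i : K) F :=
    fun i => (infDist_lt_iff hne).1 (by linarith [hpos i])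
  choose a haF ha using hanchor
  let V : ↥Fᶜ → Set ↥Fᶜ := fun i => Subtype.val ⁻¹' ball (i : K) (infDist (i : K) F / 4)
  obtain ⟨φ, hφ⟩ := PartitionOfUnity.exists_isSubordinate isClosed_univ V
    (fun i => isOpen_ball.preimage continuous_subtype_val)
    (fun x _ => mem_iUnion.2 ⟨x, mem_ball_self (by linarith [hpos x])⟩)
  refine ⟨φ, fun i => ⟨a i, haF i⟩, fun i x hx => ?_⟩
  have hix : dist (i : K) x < infDist (i : K) F / 4 := by
    rw [dist_comm]
    exact hφ i (subset_closure hx)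
  have hri : infDist (i : K) F ≤ infDist (x : K) F + dist (i : K) x :=
    infDist_le_infDist_add_dist
  calc dist (a i) (x : K) ≤ dist (a i) (i : K) + dist (i : K) x := dist_triangle _ _ _
    _ ≤ 3 * infDist (x : K) F := by
      rw [dist_comm (a i)]
      linarith [ha i]

variable (φ : PartitionOfUnity (↥Fᶜ) (↥Fᶜ)) (a : ↥Fᶜ → F)

open Classical in
def extendFun (f : C(F, ℝ)) (x : K) : ℝ :=
  if hx : x ∈ F then f ⟨x, hx⟩ else ∑ᶠ i, φ i ⟨x, hx⟩ • f (a i)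

theorem extendFun_of_mem (f : C(F, ℝ)) {x : K} (hx : x ∈ F) :
    extendFun φ a f x = f ⟨x, hx⟩ :=
  dif_pos hx

theorem extendFun_of_notMem (f : C(F, ℝ)) {x : K} (hx : x ∉ F) :
    extendFun φ a f x = ∑ᶠ i, φ i ⟨x, hx⟩ • f (a i) :=
  dif_neg hx

theorem extendFun_mem_of_convex (f : C(F, ℝ)) {t : Set ℝ} (ht : Convex ℝ t) {x : K} (hx : x ∉ F)
    (hf : ∀ i, φ i ⟨x, hx⟩ ≠ 0 → f (a i) ∈ t) : extendFun φ a f x ∈ t := by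
  rw [extendFun_of_notMem φ a f hx]
  exact φ.finsum_smul_mem_convex (g := fun i _ => f (a i)) (mem_univ _) hf ht

theorem continuousOn_extendFun_compl (f : C(F, ℝ)) : ContinuousOn (extendFun φ a f) Fᶜ := by
  rw [continuousOn_iff_continuous_domRestrict]
  have hrestrict : Fᶜ.domRestrict (extendFun φ a f) = fun x => ∑ᶠ i, φ i x • f (a i) :=
    funext fun x => extendFun_of_notMem φ a f x.2
  rw [hrestrict]
  exact φ.continuous_finsum_smul fun _ _ _ => continuousAt_const

theorem continuousAt_extendFun_of_mem (hφa : AnchorsNear φ a) (f : C(F, ℝ)) {x : K} (hx : x ∈ F) :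
    ContinuousAt (extendFun φ a f) x := by
  rw [Metric.continuousAt_iff]
  intro ε hε
  obtain ⟨δ, hδ, hfδ⟩ :=
    Metric.continuousAt_iff.1 (f.continuous.continuousAt (x := ⟨x, hx⟩)) ε hε
  refine ⟨δ / 4, by positivity, fun z hz => ?_⟩
  rw [extendFun_of_mem φ a f hx, ← mem_ball]
  by_cases hzF : z ∈ F
  · rw [extendFun_of_mem φ a f hzF]
    exact hfδ (show dist z x < δ by linarith)
  · refine extendFun_mem_of_convex φ a f (convex_ball _ _) hzF fun i hi => hfδ ?_
    have hai := hφa i _ hi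
    have hzx : infDist z F ≤ dist z x := infDist_le_dist_of_mem hx
    calc dist (a i : K) x ≤ dist (a i : K) z + dist z x := dist_triangle _ _ _
      _ < δ := by linarith

theorem continuous_extendFun (hF : IsClosed F) (hφa : AnchorsNear φ a) (f : C(F, ℝ)) :
    Continuous (extendFun φ a f) := by
  refine continuous_iff_continuousAt.2 fun x => ?_
  by_cases hx : x ∈ F
  · exact continuousAt_extendFun_of_mem φ a hφa f hx
  · exact (continuousOn_extendFun_compl φ a f).continuousAt (hF.isOpen_compl.mem_nhds hx)

theorem extendFun_add (f g : C(F, ℝ)) (x : K) :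
    extendFun φ a (f + g) x = extendFun φ a f x + extendFun φ a g x := by
  by_cases hx : x ∈ F
  · simp only [extendFun_of_mem φ a _ hx, ContinuousMap.add_apply]
  · simp only [extendFun_of_notMem φ a _ hx, ContinuousMap.add_apply, smul_add]
    exact finsum_add_distrib (φ.finite_support_smul _ _) (φ.finite_support_smul _ _)

theorem extendFun_smul (c : ℝ) (f : C(F, ℝ)) (x : K) :
    extendFun φ a (c • f) x = c • extendFun φ a f x := by
  by_cases hx : x ∈ F
  · simp only [extendFun_of_mem φ a _ hx, ContinuousMap.smul_apply]
  · simp only [extendFun_of_notMem φ a _ hx, ContinuousMap.smul_apply, smul_comm _ c]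
    exact (smul_finsum' c (φ.finite_support_smul _ _)).symm

theorem extendFun_one (x : K) : extendFun φ a 1 x = 1 := by
  by_cases hx : x ∈ F
  · exact extendFun_of_mem φ a 1 hx
  · exact extendFun_mem_of_convex φ a 1 (convex_singleton 1) hx fun _ _ => rfl

theorem norm_extendFun_le [CompactSpace F] (f : C(F, ℝ)) (x : K) :
    ‖extendFun φ a f x‖ ≤ ‖f‖ := by
  by_cases hx : x ∈ F
  · rw [extendFun_of_mem φ a f hx]
    exact f.norm_coe_le_norm _
  · rw [← mem_closedBall_zero_iff]
    exact extendFun_mem_of_convex φ a f (convex_closedBall _ _) hx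
      fun i _ => mem_closedBall_zero_iff.2 (f.norm_coe_le_norm _)

def extendₗ (hF : IsClosed F) (hφa : AnchorsNear φ a) : C(F, ℝ) →ₗ[ℝ] C(K, ℝ) where
  toFun f := ⟨extendFun φ a f, continuous_extendFun φ a hF hφa f⟩
  map_add' f g := ContinuousMap.ext (extendFun_add φ a f g)
  map_smul' c f := ContinuousMap.ext (extendFun_smul φ a c f)

theorem hasRegularExtensionOperator [CompactSpace K] (hF : IsClosed F) (hne : F.Nonempty) :
    HasRegularExtensionOperator F hF := by
  have : CompactSpace F := isCompact_iff_compactSpace.mp hF.isCompact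
  obtain ⟨φ, a, hφa⟩ := exists_anchorsNear hF hne
  have hbound (f : C(F, ℝ)) : ‖extendₗ φ a hF hφa f‖ ≤ 1 * ‖f‖ := by
    rw [one_mul]
    exact (ContinuousMap.norm_le _ (norm_nonneg f)).2 (norm_extendFun_le φ a f)
  refine ⟨(extendₗ φ a hF hφa).mkContinuous 1 hbound, fun f => ?_,
    LinearMap.mkContinuous_norm_le _ zero_le_one hbound, ?_⟩
  · ext x
    exact extendFun_of_mem φ a f x.2
  · ext x
    exact extendFun_one φ a x

end Dugundji

theorem stmt5_general {K : Type*} [TopologicalSpace K] [CompactSpace K]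
    [TopologicalSpace.MetrizableSpace K] :
    HasRegularExtensionProperty K := by
  let : MetricSpace K := TopologicalSpace.metrizableSpaceMetric K
  exact fun F hne hF => Dugundji.hasRegularExtensionOperator hF hne

theorem stmt5 {K : Type*} [TopologicalSpace K] [CompactSpace K]
    [TopologicalSpace.MetrizableSpace K] [Nonempty K] :
    HasRegularExtensionProperty K :=
  stmt5_general
end
end

section
/- Every compact line has the regular extension property; that is, if K is a linearly ordered set that is compact in its order topology and F is a nonempty closed subset of K, then there exists a bounded linear map E_F : C(F) → C(K) with ρ_F ∘ E_F = id, ‖E_F‖ ≤ 1, and E_F(1_F) = 1_K. -/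
open Filter Topology
open scoped ZeroAtInfty

noncomputable section

/-!
For `y ∉ F` let `a ≤ y ≤ b` be the nearest points of `F` on either side of `y` (they exist as
`F` is compact); on the gap `(a, b)` the extension interpolates between `f a` and `f b` along a
Urysohn function for `{a}` and `{b}`. Every value is thus a convex combination of two values of
`f`, which gives linearity, `‖E‖ ≤ 1` and `E 1 = 1`. Continuity is checked on each side of a
point `x` separately: either a gap `(p, x)` abuts `x`, and there the extension is a continuous
interpolation, or points `q ∈ F` accumulate at `x`, and on `(q, x]` the extension takes values in
the convex hull of the values of `f` on `F ∩ [q, x]`, all close to `f x`.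
-/

open Set OrderDual

section GapContinuity
variable {α E : Type*} [LinearOrder α] [TopologicalSpace α] [OrderTopology α]
  [SeminormedAddCommGroup E] [NormedSpace ℝ E] {F : Set α} {g : α → E}

theorem tendsto_nhdsLE_of_convexHull_of_continuousOn_Icc (hF : IsClosed F)
    (hgF : ContinuousOn g F)
    (hhull : ∀ p ∈ F, ∀ q ∈ F, ∀ y ∈ Icc p q,
      g y ∈ convexHull ℝ (g '' (F ∩ Icc p q)))
    (hgap : ∀ p q, Disjoint (Ioo p q) F → ContinuousOn g (Icc p q)) (x : α) :
    Tendsto g (𝓝[≤] x) (𝓝 (g x)) := by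
  by_cases hmin : IsMin x
  · rw [hmin.Iic_eq, nhdsWithin_singleton]
    exact tendsto_pure_nhds g x
  obtain ⟨l, hlx⟩ := not_isMin_iff.mp hmin
  by_cases hgapx : ∃ p < x, Disjoint (Ioo p x) F
  · obtain ⟨p, hpx, hdisj⟩ := hgapx
    exact ((hgap p x hdisj) x (right_mem_Icc.2 hpx.le)).mono_of_mem_nhdsWithin
      (Icc_mem_nhdsLE hpx)
  push Not at hgapx
  have hxF : x ∈ F := by
    by_contra hxF
    obtain ⟨p, hpx, hp⟩ := (mem_nhdsLE_iff_exists_Ioc_subset' hlx).1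
      (mem_nhdsWithin_of_mem_nhds (hF.isOpen_compl.mem_nhds hxF))
    exact hgapx p hpx (disjoint_compl_left.mono_left (Ioo_subset_Ioc_self.trans hp))
  refine (Metric.nhds_basis_closedBall.tendsto_right_iff).2 fun ε hε => ?_
  have hnear : {y | y ∈ F → g y ∈ Metric.closedBall (g x) ε} ∈ 𝓝[≤] x :=
    mem_nhdsWithin_of_mem_nhds (mem_nhdsWithin_iff_eventually.1
      ((hgF x hxF).eventually (Metric.closedBall_mem_nhds _ hε)))
  obtain ⟨p, hpx, hp⟩ := (mem_nhdsLE_iff_exists_Ioc_subset' hlx).1 hnear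
  obtain ⟨q, hq, hqF⟩ := not_disjoint_iff.1 (hgapx p hpx)
  filter_upwards [Ioc_mem_nhdsLE hq.2] with y hy
  refine convexHull_min ?_ (convex_closedBall _ _)
    (hhull q hqF x hxF y (Ioc_subset_Icc_self hy))
  rintro _ ⟨z, ⟨hzF, hz⟩, rfl⟩
  exact hp ⟨hq.1.trans_le hz.1, hz.2⟩ hzF

theorem tendsto_nhdsGE_of_convexHull_of_continuousOn_Icc (hF : IsClosed F)
    (hgF : ContinuousOn g F)
    (hhull : ∀ p ∈ F, ∀ q ∈ F, ∀ y ∈ Icc p q,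
      g y ∈ convexHull ℝ (g '' (F ∩ Icc p q)))
    (hgap : ∀ p q, Disjoint (Ioo p q) F → ContinuousOn g (Icc p q)) (x : α) :
    Tendsto g (𝓝[≥] x) (𝓝 (g x)) := by
  refine tendsto_nhdsLE_of_convexHull_of_continuousOn_Icc (α := αᵒᵈ) (F := ofDual ⁻¹' F)
    (g := g ∘ ofDual) hF hgF (fun p hp q hq y hy => ?_) (fun p q hpq => ?_) (toDual x)
  · have h := hhull (ofDual q) hq (ofDual p) hp (ofDual y) ⟨hy.2, hy.1⟩
    rwa [← toDual_ofDual p, ← toDual_ofDual q, Icc_toDual, image_comp, ← preimage_inter,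
      image_preimage_eq _ ofDual.surjective]
  · rw [← toDual_ofDual p, ← toDual_ofDual q, Ioo_toDual] at hpq
    rw [← toDual_ofDual p, ← toDual_ofDual q, Icc_toDual]
    exact hgap _ _ hpq

theorem continuous_of_convexHull_of_continuousOn_Icc (hF : IsClosed F)
    (hgF : ContinuousOn g F)
    (hhull : ∀ p ∈ F, ∀ q ∈ F, ∀ y ∈ Icc p q,
      g y ∈ convexHull ℝ (g '' (F ∩ Icc p q)))
    (hgap : ∀ p q, Disjoint (Ioo p q) F → ContinuousOn g (Icc p q)) : Continuous g :=
  continuous_iff_continuousAt.2 fun x => by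
    rw [ContinuousAt, ← nhdsLE_sup_nhdsGE, tendsto_sup]
    exact ⟨tendsto_nhdsLE_of_convexHull_of_continuousOn_Icc hF hgF hhull hgap x,
      tendsto_nhdsGE_of_convexHull_of_continuousOn_Icc hF hgF hhull hgap x⟩

end GapContinuity

section Separation
variable {X : Type*} [TopologicalSpace X] [NormalSpace X] [T1Space X]

theorem exists_continuous_eq_zero_eq_one (a b : X) :
    ∃ u : C(X, ℝ), EqOn u 0 {a} ∧ EqOn u 1 ({b} \ {a}) ∧ ∀ x, u x ∈ Icc (0 : ℝ) 1 :=
  exists_continuous_zero_one_of_isClosed isClosed_singleton (finite_singleton b).sdiff.isClosed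
    disjoint_sdiff_right

def separatingFun (a b : X) : C(X, ℝ) :=
  (exists_continuous_eq_zero_eq_one a b).choose

theorem separatingFun_left (a b : X) : separatingFun a b a = 0 :=
  (exists_continuous_eq_zero_eq_one a b).choose_spec.1 rfl

theorem separatingFun_right {a b : X} (h : b ≠ a) : separatingFun a b b = 1 :=
  (exists_continuous_eq_zero_eq_one a b).choose_spec.2.1 ⟨rfl, h⟩

theorem separatingFun_mem_Icc (a b x : X) : separatingFun a b x ∈ Icc (0 : ℝ) 1 :=
  (exists_continuous_eq_zero_eq_one a b).choose_spec.2.2 x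

def interpolate (a b : X) (s t : ℝ) : C(X, ℝ) :=
  s • (1 - separatingFun a b) + t • separatingFun a b

theorem interpolate_apply (a b : X) (s t : ℝ) (x : X) :
    interpolate a b s t x = (1 - separatingFun a b x) * s + separatingFun a b x * t := by
  simp only [interpolate, ContinuousMap.add_apply, ContinuousMap.smul_apply,
    ContinuousMap.sub_apply, ContinuousMap.one_apply, smul_eq_mul]
  ring

theorem interpolate_apply_left (a b : X) (s t : ℝ) : interpolate a b s t a = s := by
  simp [interpolate_apply, separatingFun_left]

theorem interpolate_apply_right {a b : X} {s t : ℝ} (hst : a = b → s = t) :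
    interpolate a b s t b = t := by
  rcases eq_or_ne b a with rfl | h
  · rw [interpolate_apply_left, hst rfl]
  · simp [interpolate_apply, separatingFun_right h]

theorem interpolate_mem_segment (a b : X) (s t : ℝ) (x : X) :
    interpolate a b s t x ∈ segment ℝ s t := by
  obtain ⟨h0, h1⟩ := separatingFun_mem_Icc a b x
  exact ⟨1 - separatingFun a b x, separatingFun a b x, by linarith, h0, by ring,
    (interpolate_apply a b s t x).symm⟩

end Separation

section NearestPoints
variable {K : Type*} [LinearOrder K] {F : Set K}

theorem inter_Iic_eq_of_disjoint_Ioc {p y : K} (hpy : p ≤ y) (h : Disjoint (Ioc p y) F) :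
    F ∩ Iic y = F ∩ Iic p := by
  refine Subset.antisymm (fun z ⟨hzF, hzy⟩ => ⟨hzF, not_lt.1 fun hpz => ?_⟩)
    (inter_subset_inter_right F (Iic_subset_Iic.2 hpy))
  exact disjoint_left.1 h ⟨hpz, hzy⟩ hzF

theorem inter_Ici_eq_of_disjoint_Ico {y q : K} (hyq : y ≤ q) (h : Disjoint (Ico y q) F) :
    F ∩ Ici y = F ∩ Ici q := by
  refine Subset.antisymm (fun z ⟨hzF, hyz⟩ => ⟨hzF, not_lt.1 fun hzq => ?_⟩)
    (inter_subset_inter_right F (Ici_subset_Ici.2 hyq))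
  exact disjoint_left.1 h ⟨hyz, hzq⟩ hzF

variable (F) [Nonempty F]

/- The default value is harmless: on the end gaps the extension still interpolates continuously
towards the extreme point of `F`. -/
open Classical in
def nearestBelow (y : K) : F :=
  if h : ∃ a, IsGreatest (F ∩ Iic y) a then ⟨h.choose, h.choose_spec.1.1⟩
  else Classical.arbitrary F

open Classical in
def nearestAbove (y : K) : F :=
  if h : ∃ b, IsLeast (F ∩ Ici y) b then ⟨h.choose, h.choose_spec.1.1⟩
  else Classical.arbitrary F

variable {F}

theorem isGreatest_nearestBelow {y : K} (h : ∃ a, IsGreatest (F ∩ Iic y) a) :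
    IsGreatest (F ∩ Iic y) (nearestBelow F y) := by
  rw [nearestBelow, dif_pos h]
  exact h.choose_spec

theorem isLeast_nearestAbove {y : K} (h : ∃ b, IsLeast (F ∩ Ici y) b) :
    IsLeast (F ∩ Ici y) (nearestAbove F y) := by
  rw [nearestAbove, dif_pos h]
  exact h.choose_spec

theorem nearestBelow_congr {y y' : K} (h : F ∩ Iic y = F ∩ Iic y') :
    nearestBelow F y = nearestBelow F y' := by
  by_cases hg : ∃ a, IsGreatest (F ∩ Iic y) a
  · exact Subtype.ext
      ((isGreatest_nearestBelow hg).unique (h ▸ isGreatest_nearestBelow (h ▸ hg)))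
  · rw [nearestBelow, nearestBelow, dif_neg hg, dif_neg (h ▸ hg)]

theorem nearestAbove_congr {y y' : K} (h : F ∩ Ici y = F ∩ Ici y') :
    nearestAbove F y = nearestAbove F y' := by
  by_cases hg : ∃ b, IsLeast (F ∩ Ici y) b
  · exact Subtype.ext ((isLeast_nearestAbove hg).unique (h ▸ isLeast_nearestAbove (h ▸ hg)))
  · rw [nearestAbove, nearestAbove, dif_neg hg, dif_neg (h ▸ hg)]

theorem nearestBelow_of_mem {y : K} (hy : y ∈ F) : nearestBelow F y = ⟨y, hy⟩ := by
  have hgr : IsGreatest (F ∩ Iic y) y := ⟨⟨hy, le_rfl⟩, fun _ hz => hz.2⟩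
  exact Subtype.ext ((isGreatest_nearestBelow ⟨y, hgr⟩).unique hgr)

theorem nearestAbove_of_mem {y : K} (hy : y ∈ F) : nearestAbove F y = ⟨y, hy⟩ := by
  have hle : IsLeast (F ∩ Ici y) y := ⟨⟨hy, le_rfl⟩, fun _ hz => hz.2⟩
  exact Subtype.ext ((isLeast_nearestAbove ⟨y, hle⟩).unique hle)

end NearestPoints

section GapExtension
variable {K : Type*} [LinearOrder K] [TopologicalSpace K] [OrderTopology K] {F : Set K}
  [Nonempty F]

def gapExtensionFun (f : F → ℝ) (y : K) : ℝ :=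
  interpolate (nearestBelow F y : K) (nearestAbove F y) (f (nearestBelow F y))
    (f (nearestAbove F y)) y

theorem gapExtensionFun_of_mem (f : F → ℝ) {y : K} (hy : y ∈ F) :
    gapExtensionFun f y = f ⟨y, hy⟩ := by
  rw [gapExtensionFun, nearestBelow_of_mem hy, nearestAbove_of_mem hy]
  exact interpolate_apply_left _ _ _ _

theorem gapExtensionFun_mem_segment (f : F → ℝ) (y : K) :
    gapExtensionFun f y ∈ segment ℝ (f (nearestBelow F y)) (f (nearestAbove F y)) :=
  interpolate_mem_segment _ _ _ _ _

theorem gapExtensionFun_mem_convexHull (hF : IsCompact F) (f : F → ℝ) {p q y : K} (hp : p ∈ F)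
    (hq : q ∈ F) (hy : y ∈ Icc p q) :
    gapExtensionFun f y ∈ convexHull ℝ (gapExtensionFun f '' (F ∩ Icc p q)) := by
  have hlo := isGreatest_nearestBelow
    ((hF.inter_right isClosed_Iic).exists_isGreatest ⟨p, hp, hy.1⟩)
  have hhi := isLeast_nearestAbove ((hF.inter_right isClosed_Ici).exists_isLeast ⟨q, hq, hy.2⟩)
  refine segment_subset_convexHull ?_ ?_ (gapExtensionFun_mem_segment f y)
  · rw [← gapExtensionFun_of_mem f (nearestBelow F y).2]
    exact mem_image_of_mem _ ⟨hlo.1.1, hlo.2 ⟨hp, hy.1⟩, hlo.1.2.trans hy.2⟩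
  · rw [← gapExtensionFun_of_mem f (nearestAbove F y).2]
    exact mem_image_of_mem _ ⟨hhi.1.1, hy.1.trans hhi.1.2, hhi.2 ⟨hq, hy.2⟩⟩

theorem eqOn_gapExtensionFun_of_disjoint (f : F → ℝ) {p q : K} (hpq : Disjoint (Ioo p q) F) :
    EqOn (gapExtensionFun f) (interpolate (nearestBelow F p : K) (nearestAbove F q)
      (f (nearestBelow F p)) (f (nearestAbove F q))) (Icc p q) := by
  intro y hy
  by_cases hyF : y ∈ F
  · have hend : y = p ∨ y = q := by
      by_contra h
      push Not at h
      exact disjoint_left.1 hpq ⟨hy.1.lt_of_ne h.1.symm, hy.2.lt_of_ne h.2⟩ hyF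
    rw [gapExtensionFun_of_mem f hyF]
    rcases hend with rfl | rfl
    · rw [nearestBelow_of_mem hyF]
      exact (interpolate_apply_left _ _ _ _).symm
    · rw [nearestAbove_of_mem hyF]
      exact (interpolate_apply_right fun h => congrArg f (Subtype.ext h)).symm
  · have hIoc : Disjoint (Ioc p y) F := disjoint_left.2 fun z hz hzF => disjoint_left.1 hpq
      ⟨hz.1, (hz.2.lt_of_ne (ne_of_mem_of_not_mem hzF hyF)).trans_le hy.2⟩ hzF
    have hIco : Disjoint (Ico y q) F := disjoint_left.2 fun z hz hzF => disjoint_left.1 hpq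
      ⟨hy.1.trans_lt (hz.1.lt_of_ne (ne_of_mem_of_not_mem hzF hyF).symm), hz.2⟩ hzF
    rw [gapExtensionFun, nearestBelow_congr (inter_Iic_eq_of_disjoint_Ioc hy.1 hIoc),
      nearestAbove_congr (inter_Ici_eq_of_disjoint_Ico hy.2 hIco)]

theorem continuous_gapExtensionFun (hF : IsCompact F) {f : F → ℝ} (hf : Continuous f) :
    Continuous (gapExtensionFun f) := by
  refine continuous_of_convexHull_of_continuousOn_Icc hF.isClosed ?_
    (fun p hp q hq y hy => gapExtensionFun_mem_convexHull hF f hp hq hy)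
    (fun p q hpq => (interpolate _ _ _ _).continuous.continuousOn.congr
      (eqOn_gapExtensionFun_of_disjoint f hpq))
  have hrestrict : F.domRestrict (gapExtensionFun f) = f :=
    funext fun y => gapExtensionFun_of_mem f y.2
  rwa [continuousOn_iff_continuous_domRestrict, hrestrict]

theorem abs_gapExtensionFun_le [CompactSpace F] (f : C(F, ℝ)) (y : K) :
    |gapExtensionFun f y| ≤ ‖f‖ := by
  have hmem (z : F) : f z ∈ Metric.closedBall 0 ‖f‖ :=
    mem_closedBall_zero_iff.2 (f.norm_coe_le_norm z)
  simpa using (convex_closedBall _ _).segment_subset (hmem _) (hmem _)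
    (gapExtensionFun_mem_segment f y)

variable [CompactSpace K] [CompactSpace F]

def gapExtension : C(F, ℝ) →L[ℝ] C(K, ℝ) :=
  LinearMap.mkContinuous
    { toFun f := ⟨gapExtensionFun f,
        continuous_gapExtensionFun (isCompact_iff_compactSpace.2 ‹_›) f.continuous⟩
      map_add' f f' := by
        ext y
        simp only [ContinuousMap.coe_mk, ContinuousMap.add_apply, gapExtensionFun,
          interpolate_apply]
        ring
      map_smul' c f := by
        ext y
        simp only [ContinuousMap.coe_mk, ContinuousMap.smul_apply, RingHom.id_apply,
          gapExtensionFun, interpolate_apply, smul_eq_mul]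
        ring }
    1 fun f => (ContinuousMap.norm_le _ (by positivity)).2 fun y => by
      simpa using abs_gapExtensionFun_le f y

theorem gapExtension_apply (f : C(F, ℝ)) (y : K) : gapExtension f y = gapExtensionFun f y := rfl

theorem norm_gapExtension_le : ‖(gapExtension : C(F, ℝ) →L[ℝ] C(K, ℝ))‖ ≤ 1 :=
  LinearMap.mkContinuous_norm_le _ zero_le_one _

theorem restrict_gapExtension (f : C(F, ℝ)) : (gapExtension f).restrict F = f := by
  ext ⟨y, hy⟩
  exact gapExtensionFun_of_mem f hy

theorem gapExtension_one : gapExtension (1 : C(F, ℝ)) = 1 := by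
  ext y
  simp [gapExtension_apply, gapExtensionFun, interpolate_apply]

end GapExtension

theorem stmt6 {K : Type*} [LinearOrder K] [TopologicalSpace K] [OrderTopology K]
    [CompactSpace K] :
    HasRegularExtensionProperty K := by
  intro F hne hF
  have := hne.to_subtype
  have : CompactSpace F := isCompact_iff_compactSpace.mp hF.isCompact
  exact ⟨gapExtension, restrict_gapExtension, norm_gapExtension_le, gapExtension_one⟩
end
end

section
/- Let K be a compact Hausdorff space and F a nonempty closed subset of K. If every point x ∈ F has a closed neighborhood V in K such that V ∩ F admits an extension operator in V, then F admits an extension operator in K. -/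
/-!
Cover `F` by finitely many interiors of the given neighbourhoods `Vᵢ` and take a partition of
unity `(φᵢ)` on `F` subordinate to this cover. Each `f ∈ C(F)` is restricted to `Vᵢ ∩ F`,
extended to `Vᵢ` by the local operator `Eᵢ`, multiplied by `φᵢ` and extended by zero to `K`;
since `tsupport φᵢ ⊆ interior Vᵢ` the result is continuous, linear and bounded in `f`, and it
equals `φᵢ f` on `F`. Summing over `i` gives `∑ᵢ φᵢ f = f` on `F`.
-/

open Filter Topology
open scoped ZeroAtInfty

noncomputable section

section MulExtendByZero

variable {K : Type*} [TopologicalSpace K] {V : Set K} {φ : C(K, ℝ)}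

open Classical in
theorem continuous_mulExtendByZero (hφ : tsupport φ ⊆ interior V) (g : C(V, ℝ)) :
    Continuous fun x => if hx : x ∈ V then φ x * g ⟨x, hx⟩ else 0 := by
  refine continuous_iff_continuousAt.mpr fun x => ?_
  by_cases hx : x ∈ tsupport φ
  · have hV : V ∈ 𝓝 x := mem_interior_iff_mem_nhds.mp (hφ hx)
    refine ContinuousOn.continuousAt ?_ hV
    rw [continuousOn_iff_continuous_domRestrict, Set.domRestrict_dite]
    exact (φ.continuous.comp continuous_subtype_val).mul g.continuous
  · refine (continuousAt_const (y := (0 : ℝ))).congr ?_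
    filter_upwards [(isClosed_tsupport φ).isOpen_compl.mem_nhds hx] with y hy
    simp [image_eq_zero_of_notMem_tsupport hy]

variable [CompactSpace K] [CompactSpace V]

open Classical in
def mulExtendByZero (hφ : tsupport φ ⊆ interior V) : C(V, ℝ) →L[ℝ] C(K, ℝ) :=
  LinearMap.mkContinuous
    { toFun g := ⟨_, continuous_mulExtendByZero hφ g⟩
      map_add' g₁ g₂ := by ext x; by_cases hx : x ∈ V <;> simp [hx, mul_add]
      map_smul' c g := by ext x; by_cases hx : x ∈ V <;> simp [hx, mul_left_comm] }
    ‖φ‖ fun g => by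
      refine (ContinuousMap.norm_le _ (by positivity)).mpr fun x => ?_
      by_cases hx : x ∈ V
      · simpa [hx, norm_mul] using
          mul_le_mul (φ.norm_coe_le_norm x) (g.norm_coe_le_norm ⟨x, hx⟩) (norm_nonneg _)
            (norm_nonneg _)
      · simp [hx, mul_nonneg, norm_nonneg]

theorem mulExtendByZero_apply (hφ : tsupport φ ⊆ interior V) (g : C(V, ℝ)) (x : V) :
    mulExtendByZero hφ g x = φ x * g x := by
  simp [mulExtendByZero, x.2]

theorem mulExtendByZero_apply_of_notMem (hφ : tsupport φ ⊆ interior V) (g : C(V, ℝ)) {x : K}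
    (hx : x ∉ V) : mulExtendByZero hφ g x = 0 := by
  simp [mulExtendByZero, hx]

end MulExtendByZero

def restrictPreimageVal {K : Type*} [TopologicalSpace K] (V F : Set K) :
    C(F, ℝ) →L[ℝ] C((Subtype.val : V → K) ⁻¹' F, ℝ) :=
  let j : C((Subtype.val : V → K) ⁻¹' F, F) :=
    ⟨fun x => ⟨x.1, x.2⟩, (continuous_subtype_val.comp continuous_subtype_val).subtype_mk _⟩
  ⟨(ContinuousMap.compRightAlgHom ℝ ℝ j).toLinearMap,
    ContinuousMap.compRightAlgHom_continuous ℝ ℝ j⟩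

theorem restrictPreimageVal_apply {K : Type*} [TopologicalSpace K] (V F : Set K) (f : C(F, ℝ))
    (x : (Subtype.val : V → K) ⁻¹' F) : restrictPreimageVal V F f x = f ⟨x.1, x.2⟩ :=
  rfl

theorem HasExtensionOperator.exists_mul_extension {K : Type*} [TopologicalSpace K]
    [CompactSpace K] {F V : Set K} (hV : IsClosed V)
    (hE : HasExtensionOperator ((Subtype.val : V → K) ⁻¹' F)) {φ : C(K, ℝ)}
    (hφ : tsupport φ ⊆ interior V) :
    ∃ T : C(F, ℝ) →L[ℝ] C(K, ℝ), ∀ f (x : F), T f x = φ x * f x := by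
  have : CompactSpace V := isCompact_iff_compactSpace.mp hV.isCompact
  obtain ⟨E, hE⟩ := hE
  refine ⟨(mulExtendByZero hφ).comp (E.comp (restrictPreimageVal V F)), fun f x => ?_⟩
  by_cases hxV : x.1 ∈ V
  · have hEx := congrArg (· ⟨⟨x, hxV⟩, x.2⟩) (hE (restrictPreimageVal V F f))
    simp only [ContinuousMap.restrict_apply, restrictPreimageVal_apply] at hEx
    simp [mulExtendByZero_apply hφ _ ⟨x, hxV⟩, hEx]
  · have hφx : φ x = 0 :=
      image_eq_zero_of_notMem_tsupport fun hx => hxV (interior_subset (hφ hx))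
    simp [mulExtendByZero_apply_of_notMem hφ _ hxV, hφx]

theorem PartitionOfUnity.isExtensionOperator_sum {ι K : Type*} [Fintype ι] [TopologicalSpace K]
    {F : Set K} (φ : PartitionOfUnity ι K F) (T : ι → C(F, ℝ) →L[ℝ] C(K, ℝ))
    (hT : ∀ i f (x : F), T i f x = φ i x * f x) :
    IsExtensionOperator F (∑ i, T i) := by
  intro f
  ext x
  have hφx : ∑ i, φ i x = 1 := by
    rw [← finsum_eq_sum_of_fintype]
    exact φ.sum_eq_one x.2
  simp [ContinuousMap.sum_apply, hT, ← Finset.sum_mul, hφx]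

theorem IsCompact.exists_finset_partitionOfUnity_isSubordinate {X : Type*} [TopologicalSpace X]
    [NormalSpace X] [ParacompactSpace X] {s : Set X} (hs : IsCompact s) (hs' : IsClosed s)
    (V : s → Set X) (hV : ∀ x : s, V x ∈ 𝓝 (x : X)) :
    ∃ (t : Finset s) (φ : PartitionOfUnity t X s), φ.IsSubordinate fun i => interior (V i) := by
  obtain ⟨t, ht⟩ := hs.elim_nhds_subcover' (fun (x : X) hx => interior (V ⟨x, hx⟩))
    fun x hx => interior_mem_nhds.mpr (hV ⟨x, hx⟩)
  rw [← Finset.set_biUnion_coe, Set.biUnion_eq_iUnion] at ht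
  exact ⟨t, PartitionOfUnity.exists_isSubordinate hs' _ (fun _ => isOpen_interior) ht⟩

theorem stmt7_general {K : Type*} [TopologicalSpace K] [CompactSpace K] [T2Space K]
    (F : Set K) (hF : IsClosed F)
    (h : ∀ x ∈ F, ∃ V : Set K, V ∈ nhds x ∧ IsClosed V ∧
        HasExtensionOperator ((Subtype.val : V → K) ⁻¹' F)) :
    HasExtensionOperator F := by
  choose V hV hVcl hVext using fun x : F => h x x.2
  obtain ⟨t, φ, hφ⟩ := hF.isCompact.exists_finset_partitionOfUnity_isSubordinate hF V hV
  choose T hT using fun i : t => (hVext i).exists_mul_extension (hVcl i) (hφ i)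
  exact ⟨∑ i, T i, φ.isExtensionOperator_sum T hT⟩

theorem stmt7 {K : Type*} [TopologicalSpace K] [CompactSpace K] [T2Space K]
    (F : Set K) (hFne : F.Nonempty) (hF : IsClosed F)
    (h : ∀ x ∈ F, ∃ V : Set K, V ∈ nhds x ∧ IsClosed V ∧
        HasExtensionOperator ((Subtype.val : V → K) ⁻¹' F)) :
    HasExtensionOperator F :=
  stmt7_general F hF h
end
end

section
/- Let K be a compact Hausdorff space and F a nonempty closed subset of K. If every point x ∈ F has a closed neighborhood V in K such that V ∩ F admits a regular extension operator in V, then F admits a regular extension operator in K. -/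
/-
Cover `F` by finitely many interiors of the neighbourhoods `Vᵢ` and take a partition of unity
`ρᵢ` on `F` subordinate to them. With `Eᵢ` the local operators and a fixed `x₀ ∈ F`, put
`T f = ∑ ρᵢ · Eᵢ (f|Vᵢ ∩ F) + f x₀ · (1 - ∑ ρᵢ)`, each summand extended by zero outside `Vᵢ`.
At every point `T f` is a combination of values bounded by `‖f‖` with nonnegative weights of
sum `1`, so `‖T‖ ≤ 1` and `T 1 = 1`; on `F` the last weight vanishes and `T f = f`.
-/

open Filter Topology
open scoped ZeroAtInfty

noncomputable section

theorem apply_eq_zero_of_tsupport_subset {X M : Type*} [TopologicalSpace X] [Zero M]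
    {f : X → M} {s : Set X} (hf : tsupport f ⊆ s) {x : X} (hx : x ∉ s) : f x = 0 :=
  image_eq_zero_of_notMem_tsupport fun h => hx (hf h)

section Cutoff

variable {K : Type*} [TopologicalSpace K] {V : Set K}

open Classical in
def cutoffExtend (φ : C(K, ℝ)) (hφ : tsupport φ ⊆ interior V) : C(V, ℝ) →ₗ[ℝ] C(K, ℝ) where
  toFun g :=
    { toFun := fun x => φ x * if h : x ∈ V then g ⟨x, h⟩ else 0
      continuous_toFun := by
        have hg : ContinuousOn (fun x => if h : x ∈ V then g ⟨x, h⟩ else 0) V := by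
          rw [continuousOn_iff_continuous_domRestrict]
          convert g.continuous using 1
          ext ⟨x, hx⟩
          simp [hx]
        exact ContinuousOn.continuous_of_tsupport_subset
          (φ.continuous.continuousOn.mul (hg.mono interior_subset)) isOpen_interior
          ((tsupport_mul_subset_left).trans hφ) }
  map_add' g g' := by ext x; by_cases hx : x ∈ V <;> simp [hx, mul_add]
  map_smul' c g := by ext x; by_cases hx : x ∈ V <;> simp [hx, mul_left_comm]

variable {φ : C(K, ℝ)} {hφ : tsupport φ ⊆ interior V}

theorem cutoffExtend_apply_of_mem (g : C(V, ℝ)) {x : K} (hx : x ∈ V) :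
    cutoffExtend φ hφ g x = φ x * g ⟨x, hx⟩ := by
  simp [cutoffExtend, hx]

theorem cutoffExtend_apply_of_notMem (g : C(V, ℝ)) {x : K} (hx : x ∉ V) :
    cutoffExtend φ hφ g x = 0 := by
  simp [cutoffExtend, hx]

theorem cutoffExtend_one : cutoffExtend φ hφ 1 = φ := by
  ext x
  by_cases hx : x ∈ V
  · simp [cutoffExtend_apply_of_mem _ hx]
  · rw [cutoffExtend_apply_of_notMem _ hx,
      apply_eq_zero_of_tsupport_subset (hφ.trans interior_subset) hx]

theorem abs_cutoffExtend_apply_le [CompactSpace V] (hφ0 : ∀ x, 0 ≤ φ x) (g : C(V, ℝ)) (x : K) :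
    |cutoffExtend φ hφ g x| ≤ φ x * ‖g‖ := by
  by_cases hx : x ∈ V
  · rw [cutoffExtend_apply_of_mem _ hx, abs_mul, abs_of_nonneg (hφ0 x)]
    exact mul_le_mul_of_nonneg_left (g.norm_coe_le_norm _) (hφ0 x)
  · rw [cutoffExtend_apply_of_notMem _ hx, abs_zero]
    exact mul_nonneg (hφ0 x) (norm_nonneg g)

end Cutoff

section Localization

variable {K : Type*} [TopologicalSpace K] [CompactSpace K] {F : Set K} [CompactSpace F]

def traceInclusion (V : Set K) : C((Subtype.val : V → K) ⁻¹' F, F) :=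
  ⟨fun z => ⟨z.1.1, z.2⟩, (continuous_subtype_val.comp continuous_subtype_val).subtype_mk _⟩

theorem exists_localized_extensionOperator {V : Set K} [CompactSpace V] (hF : IsClosed F)
    (hE : HasRegularExtensionOperator ((Subtype.val : V → K) ⁻¹' F)
      (hF.preimage continuous_subtype_val))
    {φ : C(K, ℝ)} (hφ0 : ∀ x, 0 ≤ φ x) (hφ : tsupport φ ⊆ interior V) :
    ∃ T : C(F, ℝ) →L[ℝ] C(K, ℝ), (∀ f x, |T f x| ≤ φ x * ‖f‖) ∧
      (∀ f (z : F), T f z = φ z * f z) ∧ T 1 = φ := by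
  have : CompactSpace ((Subtype.val : V → K) ⁻¹' F) :=
    isCompact_iff_compactSpace.mp (hF.preimage continuous_subtype_val).isCompact
  obtain ⟨E, hE_ext, hE_norm, hE_one⟩ := hE
  set T₀ : C(F, ℝ) →ₗ[ℝ] C(K, ℝ) := cutoffExtend φ hφ ∘ₗ E.toLinearMap ∘ₗ
    (ContinuousMap.compCLM ℝ ℝ (traceInclusion V)).toLinearMap
  have hT₀ : ∀ f x, |T₀ f x| ≤ φ x * ‖f‖ := fun f x => calc
    |T₀ f x| ≤ φ x * ‖E (f.comp (traceInclusion V))‖ :=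
      abs_cutoffExtend_apply_le (hφ := hφ) hφ0 _ x
    _ ≤ φ x * ‖f‖ := by
      gcongr
      · exact hφ0 x
      calc ‖E (f.comp (traceInclusion V))‖ ≤ ‖E‖ * ‖f.comp (traceInclusion V)‖ := E.le_opNorm _
        _ ≤ 1 * ‖f‖ := by
          gcongr
          exact (ContinuousMap.norm_le _ (norm_nonneg f)).mpr fun z => f.norm_coe_le_norm _
        _ = ‖f‖ := one_mul _
  refine ⟨T₀.mkContinuous ‖φ‖ fun f => (ContinuousMap.norm_le _ (by positivity)).mpr fun x => ?_,
    hT₀, fun f z => ?_, ?_⟩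
  · exact (hT₀ f x).trans (by gcongr; exact (le_abs_self _).trans (φ.norm_coe_le_norm x))
  · by_cases hz : (z : K) ∈ V
    · have := congrArg (· ⟨⟨z, hz⟩, z.2⟩) (hE_ext (f.comp (traceInclusion V)))
      simpa [T₀, cutoffExtend_apply_of_mem _ hz, traceInclusion] using congrArg (φ z * ·) this
    · simp [T₀, cutoffExtend_apply_of_notMem _ hz,
        apply_eq_zero_of_tsupport_subset (hφ.trans interior_subset) hz]
  · ext x
    simpa [T₀, hE_one] using congrArg (· x) (cutoffExtend_one (hφ := hφ))

end Localization

theorem HasRegularExtensionOperator.of_partitionOfUnity {K : Type*} [TopologicalSpace K]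
    [CompactSpace K] {F : Set K} [CompactSpace F] (hF : IsClosed F) (hFne : F.Nonempty)
    {ι : Type*} [Fintype ι] (ρ : PartitionOfUnity ι K F) (T : ι → C(F, ℝ) →L[ℝ] C(K, ℝ))
    (hT_le : ∀ i f x, |T i f x| ≤ ρ i x * ‖f‖) (hT_eq : ∀ i f (z : F), T i f z = ρ i z * f z)
    (hT_one : ∀ i, T i 1 = ρ i) :
    HasRegularExtensionOperator F hF := by
  obtain ⟨x₀, hx₀⟩ := hFne
  have hsum_le (x : K) : ∑ i, ρ i x ≤ 1 := by
    simpa only [finsum_eq_sum_of_fintype] using ρ.sum_le_one x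
  have hsum_eq {x : K} (hx : x ∈ F) : ∑ i, ρ i x = 1 := by
    simpa only [finsum_eq_sum_of_fintype] using ρ.sum_eq_one hx
  set T' := ∑ i, T i + (ContinuousMap.evalCLM ℝ (⟨x₀, hx₀⟩ : F)).smulRight (1 - ∑ i, ρ i)
  have hT' (f : C(F, ℝ)) (x : K) : T' f x = ∑ i, T i f x + f ⟨x₀, hx₀⟩ * (1 - ∑ i, ρ i x) := by
    simp [T']
  refine ⟨T', fun f => ?_, T'.opNorm_le_bound zero_le_one fun f => ?_, ?_⟩
  · ext z
    simp [hT', hT_eq, ← Finset.sum_mul, hsum_eq z.2]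
  · refine (ContinuousMap.norm_le _ (by positivity)).mpr fun x => ?_
    have hψ : 0 ≤ 1 - ∑ i, ρ i x := sub_nonneg.mpr (hsum_le x)
    calc ‖T' f x‖ ≤ ∑ i, |T i f x| + |f ⟨x₀, hx₀⟩| * (1 - ∑ i, ρ i x) := by
          rw [hT', Real.norm_eq_abs]
          refine (abs_add_le _ _).trans (add_le_add (Finset.abs_sum_le_sum_abs _ _) ?_)
          rw [abs_mul, abs_of_nonneg hψ]
      _ ≤ ∑ i, ρ i x * ‖f‖ + ‖f‖ * (1 - ∑ i, ρ i x) := by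
          gcongr with i
          · exact hT_le i f x
          · exact f.norm_coe_le_norm _
      _ = 1 * ‖f‖ := by rw [← Finset.sum_mul]; ring
  · ext x
    simp [hT', hT_one]

theorem stmt8 {K : Type*} [TopologicalSpace K] [CompactSpace K] [T2Space K]
    (F : Set K) (hFne : F.Nonempty) (hF : IsClosed F)
    (h : ∀ x ∈ F, ∃ V : Set K, V ∈ nhds x ∧ ∃ hV : IsClosed V,
        haveI : CompactSpace ↥V := isCompact_iff_compactSpace.mp hV.isCompact
        HasRegularExtensionOperator ((Subtype.val : V → K) ⁻¹' F)
          (hF.preimage continuous_subtype_val)) :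
    HasRegularExtensionOperator F hF := by
  have : CompactSpace F := isCompact_iff_compactSpace.mp hF.isCompact
  choose V hV_nhds hV_closed hV_ext using h
  obtain ⟨t, ht⟩ := hF.isCompact.elim_nhds_subcover' (fun x hx => interior (V x hx))
    fun x hx => interior_mem_nhds.mpr (hV_nhds x hx)
  obtain ⟨ρ, hρ⟩ := PartitionOfUnity.exists_isSubordinate hF
    (fun i : t => interior (V i.1 i.1.2)) (fun _ => isOpen_interior) fun x hx => by
      obtain ⟨y, hyt, hxy⟩ := Set.mem_iUnion₂.mp (ht hx)
      exact Set.mem_iUnion.mpr ⟨⟨y, hyt⟩, hxy⟩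
  choose T hT using fun i : t =>
    have : CompactSpace (V i.1 i.1.2) :=
      isCompact_iff_compactSpace.mp (hV_closed i.1 i.1.2).isCompact
    exists_localized_extensionOperator hF (hV_ext i.1 i.1.2) (ρ.nonneg i) (hρ i)
  exact .of_partitionOfUnity hF hFne ρ T (fun i => (hT i).1) (fun i => (hT i).2.1)
    fun i => (hT i).2.2
end
end

section
/- Let K be a compact Hausdorff space. If every point of K has a closed neighborhood having the extension property, then K has the extension property. -/
open Filter Topology
open scoped ZeroAtInfty

noncomputable section

/-!
Cover `K` by finitely many interiors of closed neighbourhoods `V i` with the extension property and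
take a partition of unity `φ i` subordinate to this cover. Given a closed `F`, extend `f|_(F ∩ V i)`
to `V i`, multiply by `φ i` and extend by zero to `K`; since `tsupport (φ i) ⊆ interior (V i)` this
is continuous, and on `F` the sum over `i` of these operators returns `∑ i, φ i * f = f`.
-/

section ExtendByZero

open scoped Classical

variable {K : Type*} [TopologicalSpace K] {V : Set K}

lemma eq_zero_of_tsupport_subset_interior {M : Type*} [Zero M] {ψ : K → M}
    (hψ : tsupport ψ ⊆ interior V) {x : K} (hx : x ∉ V) : ψ x = 0 :=
  image_eq_zero_of_notMem_tsupport fun h => hx (interior_subset (hψ h))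

lemma continuous_mul_extendByZero {φ : K → ℝ} (hφc : Continuous φ) (hφ : tsupport φ ⊆ interior V)
    (g : C(V, ℝ)) : Continuous fun x => if h : x ∈ V then φ x * g ⟨x, h⟩ else 0 := by
  refine continuous_of_tsupport fun x hx => ?_
  have hsupp : (Function.support fun x => if h : x ∈ V then φ x * g ⟨x, h⟩ else 0) ⊆
      Function.support φ := by
    intro y hy
    by_cases h : y ∈ V
    · simp only [Function.mem_support, h, dif_pos] at hy
      exact left_ne_zero_of_mul hy
    · simp [h] at hy
  have hV : V ∈ 𝓝 x := mem_interior_iff_mem_nhds.mp (hφ (closure_mono hsupp hx))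
  refine ContinuousOn.continuousAt ?_ hV
  rw [continuousOn_iff_continuous_domRestrict]
  convert (hφc.comp continuous_subtype_val).mul g.continuous using 1
  funext y
  simp [y.2]

variable [CompactSpace K] [CompactSpace V]

def mulExtendByZeroCLM (φ : C(K, ℝ)) (hφ : tsupport φ ⊆ interior V) : C(V, ℝ) →L[ℝ] C(K, ℝ) :=
  LinearMap.mkContinuous
    { toFun := fun g => ⟨_, continuous_mul_extendByZero φ.continuous hφ g⟩
      map_add' := fun g₁ g₂ => by ext x; by_cases h : x ∈ V <;> simp [h, mul_add]
      map_smul' := fun c g => by ext x; by_cases h : x ∈ V <;> simp [h, mul_left_comm] }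
    ‖φ‖ fun g => by
      refine (ContinuousMap.norm_le _ (by positivity)).mpr fun x => ?_
      by_cases h : x ∈ V
      · simpa [h] using mul_le_mul (φ.norm_coe_le_norm x) (g.norm_coe_le_norm ⟨x, h⟩)
          (norm_nonneg _) (norm_nonneg _)
      · simpa [h] using by positivity

lemma mulExtendByZeroCLM_apply_of_mem (φ : C(K, ℝ)) (hφ : tsupport φ ⊆ interior V)
    (g : C(V, ℝ)) {x : K} (hx : x ∈ V) : mulExtendByZeroCLM φ hφ g x = φ x * g ⟨x, hx⟩ := by
  simp [mulExtendByZeroCLM, hx]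

lemma mulExtendByZeroCLM_apply_of_notMem (φ : C(K, ℝ)) (hφ : tsupport φ ⊆ interior V)
    (g : C(V, ℝ)) {x : K} (hx : x ∉ V) : mulExtendByZeroCLM φ hφ g x = 0 := by
  simp [mulExtendByZeroCLM, hx]

end ExtendByZero

section

variable {K : Type*} [TopologicalSpace K]

lemma hasExtensionOperator_of_sum_eq_one {F : Set K} {ι : Type*} [Fintype ι]
    (φ : ι → K → ℝ) (hφ : ∀ x ∈ F, ∑ i, φ i x = 1) (T : ι → C(F, ℝ) →L[ℝ] C(K, ℝ))
    (hT : ∀ i f (x : F), T i f x = φ i x * f x) : HasExtensionOperator F := by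
  refine ⟨∑ i, T i, fun f => ContinuousMap.ext fun x => ?_⟩
  simp only [ContinuousMap.restrict_apply, sum_apply,
    ContinuousMap.sum_apply, hT, ← Finset.sum_mul, hφ x x.2, one_mul]

lemma exists_clm_apply_eq_mul_of_hasExtensionProperty [CompactSpace K] {V F : Set K} (hV : IsCompact V)
    (hVe : HasExtensionProperty V) (hF : IsClosed F) (φ : C(K, ℝ))
    (hφ : tsupport φ ⊆ interior V) :
    ∃ T : C(F, ℝ) →L[ℝ] C(K, ℝ), ∀ f (x : F), T f x = φ x * f x := by
  set S : Set V := Subtype.val ⁻¹' F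
  by_cases hS : S.Nonempty
  · have : CompactSpace V := isCompact_iff_compactSpace.mp hV
    obtain ⟨E, hE⟩ := hVe S hS (hF.preimage continuous_subtype_val)
    let j : C(S, F) := ⟨fun z => ⟨z.1, z.2⟩, by fun_prop⟩
    let restrictS : C(F, ℝ) →L[ℝ] C(S, ℝ) :=
      ⟨(ContinuousMap.compRightAlgHom ℝ ℝ j).toLinearMap,
        ContinuousMap.compRightAlgHom_continuous ℝ ℝ j⟩
    refine ⟨mulExtendByZeroCLM φ hφ ∘L E ∘L restrictS, fun f x => ?_⟩
    by_cases hxV : (x : K) ∈ V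
    · have hE' := DFunLike.congr_fun (hE (restrictS f)) ⟨⟨x, hxV⟩, x.2⟩
      simp only [ContinuousMap.restrict_apply] at hE'
      rw [ContinuousLinearMap.comp_apply, ContinuousLinearMap.comp_apply,
        mulExtendByZeroCLM_apply_of_mem _ _ _ hxV, hE']
      rfl
    · rw [ContinuousLinearMap.comp_apply, mulExtendByZeroCLM_apply_of_notMem _ _ _ hxV,
        eq_zero_of_tsupport_subset_interior hφ hxV, zero_mul]
  · refine ⟨0, fun f x => ?_⟩
    have hxV : (x : K) ∉ V := fun hxV => hS ⟨⟨x, hxV⟩, x.2⟩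
    simp [eq_zero_of_tsupport_subset_interior hφ hxV]

lemma exists_finite_partitionOfUnity_subordinate_interior [CompactSpace K] [T2Space K]
    (V : K → Set K) (hV : ∀ x, V x ∈ 𝓝 x) :
    ∃ (t : Finset K) (φ : t → C(K, ℝ)),
      (∀ i, tsupport (φ i) ⊆ interior (V i)) ∧ ∀ x, ∑ i, φ i x = 1 := by
  obtain ⟨t, ht⟩ := isCompact_univ.elim_finite_subcover (fun x => interior (V x))
    (fun _ => isOpen_interior) fun x _ =>
      Set.mem_iUnion.mpr ⟨x, mem_interior_iff_mem_nhds.mpr (hV x)⟩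
  obtain ⟨φ, hφ⟩ := PartitionOfUnity.exists_isSubordinate (ι := t) isClosed_univ
    (fun i => interior (V i)) (fun _ => isOpen_interior) fun x _ => by
      obtain ⟨i, hi, hx⟩ := Set.mem_iUnion₂.mp (ht (Set.mem_univ x))
      exact Set.mem_iUnion.mpr ⟨⟨i, hi⟩, hx⟩
  refine ⟨t, fun i => φ i, hφ, fun x => ?_⟩
  simpa [finsum_eq_sum_of_fintype] using φ.sum_eq_one (Set.mem_univ x)

end

theorem stmt9 {K : Type*} [TopologicalSpace K] [CompactSpace K] [T2Space K]
    (h : ∀ x : K, ∃ V : Set K, V ∈ nhds x ∧ IsClosed V ∧ HasExtensionProperty ↥V) :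
    HasExtensionProperty K := by
  intro F _ hF
  choose V hVn hVc hVe using h
  obtain ⟨t, φ, hφV, hφ⟩ := exists_finite_partitionOfUnity_subordinate_interior V hVn
  choose T hT using fun i : t =>
    exists_clm_apply_eq_mul_of_hasExtensionProperty (hVc i).isCompact (hVe i) hF (φ i) (hφV i)
  exact hasExtensionOperator_of_sum_eq_one (fun i => φ i) (fun x _ => hφ x) T hT
end
end

section
/- Let φ : K → L be a continuous surjection, where K and L are compact Hausdorff spaces, and assume φ admits a regular averaging operator, i.e., a bounded linear operator P : C(K) → C(L) with P ∘ φ* = id and ‖P‖ ≤ 1. If K has the extension property then L has the extension property; moreover, if K has the regular extension property then L has the regular extension property. -/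
open Filter Topology
open scoped ZeroAtInfty

noncomputable section

/-!
A regular averaging operator is local: if `g` vanishes on the fibre `φ⁻¹(y)`, then
`(P g)(y) = 0`. Indeed `Λ f = (P f)(y)` is a functional of norm at most one with `Λ (h ∘ φ) = 1`
whenever `h(y) = 1`; taking `0 ≤ h ≤ 1` to vanish on `φ({|g| ≥ ε})` (Urysohn), comparing
`Λ (g ± ‖g‖ • h ∘ φ)` with `‖g ± ‖g‖ • h ∘ φ‖ ≤ ‖g‖ + ε` gives `|Λ g| ≤ ε`.

Consequently, if `E` extends functions from `φ⁻¹(F)` to `K`, then `f ↦ P (E (f ∘ φ))` extends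
functions from `F` to `L`: at `y ∈ F`, `E (f ∘ φ)` and `f̃ ∘ φ`, for a Tietze extension `f̃` of
`f`, agree on the fibre over `y`, and `P (f̃ ∘ φ) = f̃`. This operator has norm at most `‖E‖`
and fixes `1` if `E` does.
-/

open Set

namespace ContinuousMap

variable {X Y 𝕜 E : Type*} [TopologicalSpace X] [CompactSpace X] [TopologicalSpace Y]
  [CompactSpace Y] [NontriviallyNormedField 𝕜] [NormedAddCommGroup E] [NormedSpace 𝕜 E]

lemma norm_evalCLM_le (x : X) : ‖(evalCLM 𝕜 x : C(X, E) →L[𝕜] E)‖ ≤ 1 :=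
  ContinuousLinearMap.opNorm_le_bound _ zero_le_one fun f => by
    simpa using f.norm_coe_le_norm x

lemma norm_compCLM_le (f : C(X, Y)) : ‖(compCLM 𝕜 E f : C(Y, E) →L[𝕜] C(X, E))‖ ≤ 1 :=
  ContinuousLinearMap.opNorm_le_bound _ zero_le_one fun g => by
    rw [one_mul, norm_le _ (norm_nonneg g)]
    exact fun x => g.norm_coe_le_norm (f x)

end ContinuousMap

lemma ContinuousLinearMap.abs_apply_le_of_bump {X : Type*} [TopologicalSpace X] [CompactSpace X]
    (Λ : C(X, ℝ) →L[ℝ] ℝ) (hΛ : ‖Λ‖ ≤ 1) {u g : C(X, ℝ)} (hu : ∀ x, u x ∈ Icc 0 1)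
    (hΛu : Λ u = 1) {ε : ℝ} (hε : 0 ≤ ε) (hg : ∀ x, u x ≠ 0 → |g x| ≤ ε) : |Λ g| ≤ ε := by
  have shifted : ∀ s : ℝ, |s| = ‖g‖ → |Λ g + s| ≤ ‖g‖ + ε := fun s hs =>
    calc |Λ g + s| = ‖Λ (g + s • u)‖ := by simp [hΛu]
      _ ≤ ‖g + s • u‖ := Λ.le_of_opNorm_le hΛ _ |>.trans_eq (one_mul _)
      _ ≤ ‖g‖ + ε := (ContinuousMap.norm_le _ (by positivity)).2 fun x => by
          obtain ⟨hu0, hu1⟩ := hu x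
          by_cases hux : u x = 0
          · simpa [hux] using (g.norm_coe_le_norm x).trans (le_add_of_nonneg_right hε)
          · calc ‖g x + s * u x‖ ≤ |g x| + |s| * u x := by
                  simpa [abs_mul, abs_of_nonneg hu0] using abs_add_le (g x) (s * u x)
              _ ≤ ε + ‖g‖ * 1 := by
                  gcongr
                  · exact hg x hux
                  · exact hs.le
              _ = ‖g‖ + ε := by ring
  have hplus := abs_le.1 (shifted ‖g‖ (abs_norm g))
  have hminus := abs_le.1 (shifted (-‖g‖) (by simp))
  exact abs_le.2 ⟨by linarith [hminus.1], by linarith [hplus.2]⟩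

section Averaging

variable {K L : Type*} [TopologicalSpace K] [TopologicalSpace L] {φ : C(K, L)}
  {P : C(K, ℝ) →L[ℝ] C(L, ℝ)}

variable (φ P) in
def averagedExtension (F : Set L) (E : C(φ ⁻¹' F, ℝ) →L[ℝ] C(K, ℝ)) :
    C(F, ℝ) →L[ℝ] C(L, ℝ) :=
  P.comp (E.comp (ContinuousMap.compCLM ℝ ℝ (φ.restrictPreimage F)))

lemma averagedExtension_one (hP : ∀ f : C(L, ℝ), P (f.comp φ) = f) {F : Set L}
    {E : C(φ ⁻¹' F, ℝ) →L[ℝ] C(K, ℝ)} (hE : E 1 = 1) : averagedExtension φ P F E 1 = 1 := by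
  simpa [averagedExtension, hE] using hP 1

variable [CompactSpace K] [CompactSpace L]

lemma norm_averagedExtension_le (hPnorm : ‖P‖ ≤ 1) {F : Set L} [CompactSpace F]
    [CompactSpace (φ ⁻¹' F)] (E : C(φ ⁻¹' F, ℝ) →L[ℝ] C(K, ℝ)) :
    ‖averagedExtension φ P F E‖ ≤ ‖E‖ :=
  calc ‖averagedExtension φ P F E‖
      ≤ ‖P‖ * (‖E‖ * ‖ContinuousMap.compCLM ℝ ℝ (φ.restrictPreimage F)‖) :=
        (P.opNorm_comp_le _).trans (by gcongr; exact E.opNorm_comp_le _)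
    _ ≤ 1 * (‖E‖ * 1) := by gcongr; exact ContinuousMap.norm_compCLM_le _
    _ = ‖E‖ := by ring

variable [T2Space L]

lemma apply_eq_zero_of_forall_fiber_eq_zero (hP : ∀ f : C(L, ℝ), P (f.comp φ) = f)
    (hPnorm : ‖P‖ ≤ 1) {y : L} {g : C(K, ℝ)} (hg : ∀ x, φ x = y → g x = 0) : P g y = 0 := by
  have hΛ : ‖(ContinuousMap.evalCLM ℝ y).comp P‖ ≤ 1 := by
    have h_comp := (ContinuousMap.evalCLM ℝ y).opNorm_comp_le P
    have h_eval := ContinuousMap.norm_evalCLM_le (𝕜 := ℝ) (E := ℝ) y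
    exact h_comp.trans (mul_le_one₀ h_eval (norm_nonneg P) hPnorm)
  refine abs_nonpos_iff.1 (le_of_forall_pos_le_add fun ε hε => ?_)
  set U : Set K := {x | |g x| < ε}
  have hU : IsClosed (φ '' Uᶜ) :=
    ((isOpen_lt (by fun_prop) continuous_const).isClosed_compl.isCompact.image
      φ.continuous).isClosed
  have hyU : y ∉ φ '' Uᶜ := by
    rintro ⟨x, hx, rfl⟩
    exact hx (by simp [U, hg x rfl, hε])
  obtain ⟨h, h_zero, h_one, h_mem⟩ := exists_continuous_zero_one_of_isClosed hU
    isClosed_singleton (disjoint_singleton_right.2 hyU)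
  rw [zero_add]
  refine ContinuousLinearMap.abs_apply_le_of_bump _ hΛ (u := h.comp φ) (fun x => h_mem _)
    (by simp [hP, h_one rfl]) hε.le fun x hx => ?_
  by_contra hgx
  exact hx (h_zero ⟨x, fun hxU => hgx hxU.le, rfl⟩)

lemma isExtensionOperator_averagedExtension (hP : ∀ f : C(L, ℝ), P (f.comp φ) = f)
    (hPnorm : ‖P‖ ≤ 1) {F : Set L} (hF : IsClosed F) {E : C(φ ⁻¹' F, ℝ) →L[ℝ] C(K, ℝ)}
    (hE : IsExtensionOperator (φ ⁻¹' F) E) :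
    IsExtensionOperator F (averagedExtension φ P F E) := by
  intro f
  ext ⟨y, hy⟩
  obtain ⟨f', rfl⟩ := f.exists_restrict_eq hF
  have hvanish : ∀ x, φ x = y →
      (E ((f'.restrict F).comp (φ.restrictPreimage F)) - f'.comp φ) x = 0 := by
    rintro x rfl
    simpa [sub_eq_zero] using
      DFunLike.congr_fun (hE ((f'.restrict F).comp (φ.restrictPreimage F))) ⟨x, hy⟩
  have := apply_eq_zero_of_forall_fiber_eq_zero hP hPnorm hvanish
  rw [map_sub, hP, ContinuousMap.sub_apply, sub_eq_zero] at this
  simpa [averagedExtension] using this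

end Averaging

theorem stmt10_general {K L : Type*} [TopologicalSpace K] [CompactSpace K]
    [TopologicalSpace L] [CompactSpace L] [T2Space L]
    (φ : C(K, L)) (hφ : Function.Surjective φ)
    (P : C(K, ℝ) →L[ℝ] C(L, ℝ)) (hP : ∀ f : C(L, ℝ), P (f.comp φ) = f)
    (hPnorm : ‖P‖ ≤ 1) :
    (HasExtensionProperty K → HasExtensionProperty L) ∧
      (HasRegularExtensionProperty K → HasRegularExtensionProperty L) := by
  refine ⟨fun hK F hFne hF => ?_, fun hK F hFne hF => ?_⟩
  · obtain ⟨E, hE⟩ := hK _ (hFne.preimage hφ) (hF.preimage φ.continuous)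
    exact ⟨_, isExtensionOperator_averagedExtension hP hPnorm hF hE⟩
  · have := isCompact_iff_compactSpace.mp hF.isCompact
    have := isCompact_iff_compactSpace.mp (hF.preimage φ.continuous).isCompact
    obtain ⟨E, hE, hE_norm, hE_one⟩ := hK _ (hFne.preimage hφ) (hF.preimage φ.continuous)
    exact ⟨_, isExtensionOperator_averagedExtension hP hPnorm hF hE,
      (norm_averagedExtension_le hPnorm E).trans hE_norm, averagedExtension_one hP hE_one⟩

theorem stmt10 {K L : Type*} [TopologicalSpace K] [CompactSpace K] [T2Space K]
    [TopologicalSpace L] [CompactSpace L] [T2Space L]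
    (φ : C(K, L)) (hφ : Function.Surjective φ)
    (P : C(K, ℝ) →L[ℝ] C(L, ℝ)) (hP : ∀ f : C(L, ℝ), P (f.comp φ) = f)
    (hPnorm : ‖P‖ ≤ 1) :
    (HasExtensionProperty K → HasExtensionProperty L) ∧
      (HasRegularExtensionProperty K → HasRegularExtensionProperty L) :=
  stmt10_general φ hφ P hP hPnorm
end
end

section
/- Let K be a compact Hausdorff space, F a closed subset of K, and G a closed subset of F. If F admits an extension operator modulo G in K, and G admits an extension operator in K, then F admits an extension operator in K. -/
open Filter Topology
open scoped ZeroAtInfty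

noncomputable section

/-!
With `E_G` an extension operator for `G` and `E₀` one modulo `G` for `F`, the operator
`f ↦ E_G (f|_G) + E₀ (f - (E_G (f|_G))|_F)` extends functions from `F`: the argument of `E₀`
vanishes on `G`, and the two terms restrict to `(E_G (f|_G))|_F` and `f - (E_G (f|_G))|_F`.
-/

def ContinuousMap.compRightCLM (R : Type*) {α β M : Type*} [TopologicalSpace α]
    [TopologicalSpace β] [Semiring R] [TopologicalSpace M] [AddCommMonoid M] [ContinuousAdd M]
    [Module R M] [ContinuousConstSMul R M] (f : C(α, β)) : C(β, M) →L[R] C(α, M) where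
  toFun g := g.comp f
  map_add' _ _ := rfl
  map_smul' _ _ := rfl
  cont := continuous_precomp f

theorem ContinuousLinearMap.exists_rightInverse_of_rightInverse_modulo
    {R X Y : Type*} [Ring R] [TopologicalSpace X] [AddCommGroup X] [Module R X] [ContinuousAdd X]
    [TopologicalSpace Y] [AddCommGroup Y] [Module R Y] [IsTopologicalAddGroup Y]
    (ρ : X →L[R] Y) {p : Submodule R Y} (E₀ : p →L[R] X) (hE₀ : ∀ y, ρ (E₀ y) = y)
    (S : Y →L[R] X) (hS : ∀ y, y - ρ (S y) ∈ p) :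
    ∃ E : Y →L[R] X, ∀ y, ρ (E y) = y := by
  have hS' : ∀ y, (ContinuousLinearMap.id R Y - ρ ∘L S) y ∈ p := hS
  refine ⟨S + E₀ ∘L (ContinuousLinearMap.id R Y - ρ ∘L S).codRestrict p hS', fun y => ?_⟩
  simp [hE₀]

theorem sub_extend_restrict_mem_vanishingSubmodule {K : Type*} [TopologicalSpace K]
    {F G : Set K} (hGF : G ⊆ F) {EG : C(↥G, ℝ) →L[ℝ] C(K, ℝ)}
    (hEG : IsExtensionOperator G EG) (f : C(↥F, ℝ)) :
    f - (EG (f.comp (ContinuousMap.inclusion hGF))).restrict F ∈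
      vanishingSubmodule ((Subtype.val : F → K) ⁻¹' G) := by
  intro x hx
  have hext := DFunLike.congr_fun (hEG (f.comp (ContinuousMap.inclusion hGF))) ⟨x, hx⟩
  exact sub_eq_zero.mpr hext.symm

theorem stmt11_general {K : Type*} [TopologicalSpace K]
    (F G : Set K) (hGF : G ⊆ F)
    (hmod : ∃ E : ↥(vanishingSubmodule ((Subtype.val : F → K) ⁻¹' G)) →L[ℝ]
        ↥(vanishingSubmodule G),
        ∀ f, ((E f : C(K, ℝ)).restrict F) = (f : C(↥F, ℝ)))
    (hGext : HasExtensionOperator G) :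
    HasExtensionOperator F := by
  obtain ⟨E₀, hE₀⟩ := hmod
  obtain ⟨EG, hEG⟩ := hGext
  exact ContinuousLinearMap.exists_rightInverse_of_rightInverse_modulo
    (ContinuousMap.compRightCLM ℝ ⟨Subtype.val, continuous_subtype_val⟩)
    ((vanishingSubmodule G).subtypeL ∘L E₀) hE₀
    (EG ∘L ContinuousMap.compRightCLM ℝ (ContinuousMap.inclusion hGF))
    (sub_extend_restrict_mem_vanishingSubmodule hGF hEG)

theorem stmt11 {K : Type*} [TopologicalSpace K] [CompactSpace K] [T2Space K]
    (F G : Set K) (hF : IsClosed F) (hG : IsClosed G) (hGF : G ⊆ F)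
    (hmod : ∃ E : ↥(vanishingSubmodule ((Subtype.val : F → K) ⁻¹' G)) →L[ℝ]
        ↥(vanishingSubmodule G),
        ∀ f, ((E f : C(K, ℝ)).restrict F) = (f : C(↥F, ℝ)))
    (hGext : HasExtensionOperator G) :
    HasExtensionOperator F :=
  stmt11_general F G hGF hmod hGext
end
end

section
/- Let K be a compact Hausdorff space and let K' denote its Cantor–Bendixson derivative. If K' has the extension property and K' admits an extension operator in K, then K has the extension property. -/
open Filter Topology
open scoped ZeroAtInfty

noncomputable section

/-!
Let `K'` be the set of accumulation points of `K` and `F ⊆ K` closed. Restricting to `F ∩ K'`,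
extending into `K'` and then into `K` gives an operator `T : C(F) → C(K)` with `T f = f` on
`F ∩ K'`. Every point of the frontier of `F` is an accumulation point, so the function equal to
`f` on `F` and to `T f` off `F` is continuous, and it depends linearly and boundedly on `f`.
-/

open Set

theorem frontier_subset_derivedSet_univ {X : Type*} [TopologicalSpace X] (s : Set X) :
    frontier s ⊆ derivedSet univ := by
  intro x hx
  rw [frontier_eq_closure_inter_closure] at hx
  rw [mem_derivedSet, accPt_iff_nhds]
  intro U hU
  obtain ⟨y, hyU, hys⟩ := mem_closure_iff_nhds.mp hx.1 U hU
  obtain ⟨z, hzU, hzs⟩ := mem_closure_iff_nhds.mp hx.2 U hU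
  by_cases hyx : y = x
  · exact ⟨z, ⟨hzU, trivial⟩, fun hzx => hzs (hzx ▸ hyx ▸ hys)⟩
  · exact ⟨y, ⟨hyU, trivial⟩, hyx⟩

namespace ContinuousMap

variable {X Y : Type*} [TopologicalSpace X] [TopologicalSpace Y]

def compRightCLM_s12 (g : C(X, Y)) : C(Y, ℝ) →L[ℝ] C(X, ℝ) where
  toLinearMap := (compRightAlgHom ℝ ℝ g).toLinearMap
  cont := compRightAlgHom_continuous ℝ ℝ g

variable {F : Set X}

open scoped Classical in
def glue (hF : IsClosed F) (f : C(F, Y)) (g : C(X, Y))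
    (hfg : ∀ x : F, (x : X) ∈ frontier F → g x = f x) : C(X, Y) where
  toFun x := if hx : x ∈ F then f ⟨x, hx⟩ else g x
  continuous_toFun := by
    have hF_on : ContinuousOn (fun x => if hx : x ∈ F then f ⟨x, hx⟩ else g x) F := by
      rw [continuousOn_iff_continuous_domRestrict]
      convert f.continuous using 1
      ext x
      simp [x.2]
    have hFc_on : ContinuousOn (fun x => if hx : x ∈ F then f ⟨x, hx⟩ else g x) (closure Fᶜ) := by
      refine g.continuous.continuousOn.congr fun x hx => ?_
      by_cases hxF : x ∈ F
      · rw [dif_pos hxF, hfg ⟨x, hxF⟩ ⟨subset_closure hxF, by rwa [closure_compl] at hx⟩]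
      · rw [dif_neg hxF]
    rw [← continuousOn_univ]
    exact hF_on.union_of_isClosed hFc_on hF isClosed_closure |>.mono fun x _ =>
      (em (x ∈ F)).imp id (subset_closure ·)

open scoped Classical in
theorem glue_apply (hF : IsClosed F) (f : C(F, Y)) (g : C(X, Y))
    (hfg : ∀ x : F, (x : X) ∈ frontier F → g x = f x) (x : X) :
    glue hF f g hfg x = if hx : x ∈ F then f ⟨x, hx⟩ else g x := rfl

end ContinuousMap

theorem IsExtensionOperator.apply_coe {K : Type*} [TopologicalSpace K] {F : Set K}
    {E : C(↥F, ℝ) →L[ℝ] C(K, ℝ)} (hE : IsExtensionOperator F E) (f : C(↥F, ℝ)) (x : F) :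
    E f x = f x :=
  DFunLike.congr_fun (hE f) x

theorem exists_clm_eq_on_of_hasExtensionProperty {K : Type*} [TopologicalSpace K]
    {D : Set K} (hD : HasExtensionProperty D) (hDK : HasExtensionOperator D)
    {F : Set K} (hF : IsClosed F) :
    ∃ T : C(F, ℝ) →L[ℝ] C(K, ℝ), ∀ f (x : F), (x : K) ∈ D → T f x = f x := by
  set S : Set D := Subtype.val ⁻¹' F
  rcases S.eq_empty_or_nonempty with hS | hS
  · exact ⟨0, fun f x hx => (eq_empty_iff_forall_notMem.mp hS ⟨x, hx⟩ x.2).elim⟩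
  obtain ⟨E₁, hE₁⟩ := hD S hS (hF.preimage continuous_subtype_val)
  obtain ⟨E₂, hE₂⟩ := hDK
  let ι : C(S, F) := ⟨fun y => ⟨y.1.1, y.2⟩, by fun_prop⟩
  refine ⟨E₂ ∘L E₁ ∘L ContinuousMap.compRightCLM_s12 ι, fun f x hx => ?_⟩
  calc (E₂ ∘L E₁ ∘L ContinuousMap.compRightCLM_s12 ι) f x
      = E₁ (f.comp ι) ⟨x, hx⟩ := hE₂.apply_coe _ ⟨x, hx⟩
    _ = f x := hE₁.apply_coe _ ⟨⟨x, hx⟩, x.2⟩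

theorem hasExtensionOperator_of_eq_on_frontier {K : Type*} [TopologicalSpace K] [CompactSpace K]
    {F : Set K} (hF : IsClosed F) (T : C(F, ℝ) →L[ℝ] C(K, ℝ))
    (hT : ∀ f (x : F), (x : K) ∈ frontier F → T f x = f x) :
    HasExtensionOperator F := by
  have : CompactSpace F := isCompact_iff_compactSpace.mp hF.isCompact
  let Λ : C(F, ℝ) →ₗ[ℝ] C(K, ℝ) :=
    { toFun f := ContinuousMap.glue hF f (T f) (hT f)
      map_add' f g := by
        ext x
        simp only [ContinuousMap.glue_apply, map_add, ContinuousMap.add_apply]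
        split_ifs <;> rfl
      map_smul' c f := by
        ext x
        simp only [ContinuousMap.glue_apply, map_smul, ContinuousMap.smul_apply, RingHom.id_apply]
        split_ifs <;> rfl }
  have hΛ : ∀ f, ‖Λ f‖ ≤ max 1 ‖T‖ * ‖f‖ := fun f => by
    refine (ContinuousMap.norm_le _ (by positivity)).mpr fun x => ?_
    rw [max_mul_of_nonneg _ _ (norm_nonneg f), one_mul]
    change ‖ContinuousMap.glue hF f (T f) (hT f) x‖ ≤ _
    rw [ContinuousMap.glue_apply]
    split_ifs
    · exact (f.norm_coe_le_norm _).trans (le_max_left _ _)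
    · exact ((T f).norm_coe_le_norm x).trans ((T.le_opNorm f).trans (le_max_right _ _))
  refine ⟨Λ.mkContinuous _ hΛ, fun f => ?_⟩
  ext x
  change ContinuousMap.glue hF f (T f) (hT f) x = f x
  simp [ContinuousMap.glue_apply]

theorem stmt12_general {K : Type*} [TopologicalSpace K] [CompactSpace K]
    (hK' : HasExtensionProperty ↥(derivedSet (Set.univ : Set K)))
    (hE : HasExtensionOperator (derivedSet (Set.univ : Set K))) :
    HasExtensionProperty K := by
  intro F _ hF
  obtain ⟨T, hT⟩ := exists_clm_eq_on_of_hasExtensionProperty hK' hE hF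
  exact hasExtensionOperator_of_eq_on_frontier hF T fun f x hx =>
    hT f x (frontier_subset_derivedSet_univ F hx)

theorem stmt12 {K : Type*} [TopologicalSpace K] [CompactSpace K] [T2Space K]
    (hK' : HasExtensionProperty ↥(derivedSet (Set.univ : Set K)))
    (hE : HasExtensionOperator (derivedSet (Set.univ : Set K))) :
    HasExtensionProperty K :=
  stmt12_general hK' hE
end
end
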